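/- arXiv:2509.14952 — 7 statements merged into one kernel-verified Lean document; each statement's English description precedes it below -/
import Mathlib

section
/- Let p ∈ (1, 2] and let X_1, …, X_n be random vectors in ℝ^d forming a martingale difference sequence, i.e. E[X_j | X_{j−1}, …, X_1] = 0 almost surely for all j = 1, …, n, with E[‖X_j‖^p] < ∞ for every j. Then, with S_n := Σ_{j=1}^n X_j, one has E[‖S_n‖^p] ≤ 2 Σ_{j=1}^n E[‖X_j‖^p]. -/
set_option maxHeartbeats 1000000

open MeasureTheory ProbabilityTheory RealInnerProductSpace ENNReal

/-- Tangent line inequality for the concave function `u ↦ u ^ θ`, `0 ≤ θ ≤ 1`. -/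
lemma concave_tangent_rpow {θ u v : ℝ} (hθ0 : 0 ≤ θ) (hθ1 : θ ≤ 1) (hu : 0 ≤ u) (hv : 0 < v) :
    u ^ θ ≤ v ^ θ + θ * v ^ (θ - 1) * (u - v) := by
  have h1 : (u / v) ^ θ ≤ 1 + θ * (u / v - 1) := by
    have := rpow_one_add_le_one_add_mul_self (s := u / v - 1)
      (by have := div_nonneg hu hv.le; linarith) hθ0 hθ1
    simpa using this
  have h2 : u ^ θ = v ^ θ * (u / v) ^ θ := by
    rw [← Real.mul_rpow hv.le (div_nonneg hu hv.le), mul_div_cancel₀ _ hv.ne']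
  rw [h2]
  have h3 : v ^ θ * (1 + θ * (u / v - 1)) = v ^ θ + θ * v ^ (θ - 1) * (u - v) := by
    have hv1 : v ^ (θ - 1) = v ^ θ / v := by
      rw [Real.rpow_sub hv, Real.rpow_one]
    rw [hv1]
    field_simp
  calc v ^ θ * (u / v) ^ θ ≤ v ^ θ * (1 + θ * (u / v - 1)) := by
        apply mul_le_mul_of_nonneg_left h1 (Real.rpow_nonneg hv.le θ)
    _ = v ^ θ + θ * v ^ (θ - 1) * (u - v) := h3

/-- Tangent line inequality for the convex function `u ↦ u ^ q`, `1 ≤ q`. -/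
lemma convex_tangent_rpow {q u v : ℝ} (hq : 1 ≤ q) (hu : 0 ≤ u) (hv : 0 < v) :
    v ^ q + q * v ^ (q - 1) * (u - v) ≤ u ^ q := by
  have h1 : 1 + q * (u / v - 1) ≤ (u / v) ^ q := by
    have := one_add_mul_self_le_rpow_one_add (s := u / v - 1)
      (by have := div_nonneg hu hv.le; linarith) hq
    simpa using this
  have h2 : u ^ q = v ^ q * (u / v) ^ q := by
    rw [← Real.mul_rpow hv.le (div_nonneg hu hv.le), mul_div_cancel₀ _ hv.ne']
  rw [h2]
  have hv1 : v ^ (q - 1) = v ^ q / v := by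
    rw [Real.rpow_sub hv, Real.rpow_one]
  calc v ^ q + q * v ^ (q - 1) * (u - v)
      = v ^ q * (1 + q * (u / v - 1)) := by rw [hv1]; field_simp
    _ ≤ v ^ q * (u / v) ^ q := mul_le_mul_of_nonneg_left h1 (Real.rpow_nonneg hv.le q)

lemma sq_rpow_half (p : ℝ) {x : ℝ} (hx : 0 ≤ x) : ((x ^ 2 : ℝ)) ^ (p / 2) = x ^ p := by
  rw [← Real.rpow_natCast x 2, ← Real.rpow_mul hx]
  congr 1; ring

lemma sq_rpow_half_sub_one (p : ℝ) {x : ℝ} (hx : 0 ≤ x) :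
    ((x ^ 2 : ℝ)) ^ (p / 2 - 1) = x ^ (p - 2) := by
  rw [← Real.rpow_natCast x 2, ← Real.rpow_mul hx]
  congr 1; push_cast; ring

lemma scalar_key {p : ℝ} (hp1 : 1 < p) (hp2 : p ≤ 2) {a b s : ℝ} (ha : 0 ≤ a) (hb : 0 ≤ b)
    (hs : |s| ≤ a * b) :
    (a ^ 2 + 2 * s + b ^ 2) ^ (p / 2) ≤ a ^ p + p * (a ^ (p - 2) * s) + 2 * b ^ p := by
  have hp0 : (0:ℝ) < p := by linarith
  obtain ⟨hs1, hs2⟩ := abs_le.mp hs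
  -- degenerate cases
  rcases eq_or_lt_of_le ha with ha0 | ha0
  · have hs0 : s = 0 := by nlinarith
    subst hs0
    rw [← ha0]
    have h1 : ((0:ℝ) ^ 2 + 2 * 0 + b ^ 2) = b ^ 2 := by ring
    rw [h1, sq_rpow_half p hb, Real.zero_rpow hp0.ne']
    have : 0 ≤ b ^ p := Real.rpow_nonneg hb p
    nlinarith
  rcases eq_or_lt_of_le hb with hb0 | hb0
  · have hs0 : s = 0 := by nlinarith
    subst hs0
    rw [← hb0]
    have h1 : (a ^ 2 + 2 * 0 + (0:ℝ) ^ 2) = a ^ 2 := by ring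
    rw [h1, sq_rpow_half p ha, Real.zero_rpow hp0.ne']
    norm_num
  -- main case: a, b > 0
  have hu0 : 0 ≤ a ^ 2 + 2 * s + b ^ 2 := by nlinarith [sq_nonneg (a - b)]
  rcases le_or_gt b (2 * a) with hba | hba
  · -- case b ≤ 2a: tangent at a²
    have t := concave_tangent_rpow (θ := p / 2) (u := a ^ 2 + 2 * s + b ^ 2) (v := a ^ 2)
      (by linarith) (by linarith) hu0 (by positivity)
    rw [sq_rpow_half p ha, sq_rpow_half_sub_one p ha] at t
    have hkey : p / 2 * a ^ (p - 2) * (a ^ 2 + 2 * s + b ^ 2 - a ^ 2)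
        = p * (a ^ (p - 2) * s) + p / 2 * a ^ (p - 2) * b ^ 2 := by ring
    rw [hkey] at t
    have hfin : p / 2 * a ^ (p - 2) * b ^ 2 ≤ 2 * b ^ p := by
      have hA : (0:ℝ) < a ^ (2 - p) := Real.rpow_pos_of_pos ha0 _
      have hBp : (0:ℝ) ≤ b ^ p := Real.rpow_nonneg hb p
      have hB2 : (0:ℝ) ≤ b ^ (2 - p) := Real.rpow_nonneg hb _
      have h1 : b ^ (2 - p) ≤ (2 * a) ^ (2 - p) :=
        Real.rpow_le_rpow hb hba (by linarith)
      have h2 : (2 * a) ^ (2 - p) = 2 ^ (2 - p) * a ^ (2 - p) :=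
        Real.mul_rpow (by norm_num) ha
      have h3 : (2:ℝ) ^ (2 - p) ≤ 2 ^ (1:ℝ) :=
        Real.rpow_le_rpow_of_exponent_le one_le_two (by linarith)
      rw [Real.rpow_one] at h3
      have hkey2 : p * b ^ (2 - p) ≤ 4 * a ^ (2 - p) := by nlinarith
      have e1 : a ^ (p - 2) = (a ^ (2 - p))⁻¹ := by
        rw [show p - 2 = -(2 - p) by ring, Real.rpow_neg ha]
      have e2 : (b:ℝ) ^ 2 = b ^ (2 - p) * b ^ p := by
        rw [← Real.rpow_natCast b 2, ← Real.rpow_add hb0]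
        norm_num
      rw [e1, e2]
      rw [show p / 2 * (a ^ (2 - p))⁻¹ * (b ^ (2 - p) * b ^ p)
          = p * b ^ (2 - p) * b ^ p / (2 * a ^ (2 - p)) by field_simp]
      rw [div_le_iff₀ (by positivity)]
      nlinarith [mul_le_mul_of_nonneg_right hkey2 hBp]
    linarith
  · -- case b > 2a: tangent at (b-a)²
    have hab : (0:ℝ) < b - a := by linarith
    have t := concave_tangent_rpow (θ := p / 2) (u := a ^ 2 + 2 * s + b ^ 2) (v := (b - a) ^ 2)
      (by linarith) (by linarith) hu0 (by positivity)
    rw [sq_rpow_half p hab.le, sq_rpow_half_sub_one p hab.le] at t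
    have hdiff : a ^ 2 + 2 * s + b ^ 2 - (b - a) ^ 2 = 2 * (s + a * b) := by ring
    rw [hdiff] at t
    have hsab : 0 ≤ s + a * b := by linarith
    have h5 : (b - a) ^ (p - 2) ≤ a ^ (p - 2) :=
      Real.rpow_le_rpow_of_nonpos ha0 (by linarith) (by linarith)
    have h6 : p / 2 * (b - a) ^ (p - 2) * (2 * (s + a * b))
        ≤ p / 2 * a ^ (p - 2) * (2 * (s + a * b)) := by
      have := mul_le_mul_of_nonneg_left h5 (by linarith : (0:ℝ) ≤ p / 2)
      exact mul_le_mul_of_nonneg_right this (by linarith)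
    have hapow : a ^ (p - 1) = a ^ (p - 2) * a := by
      rw [show p - 1 = p - 2 + 1 by ring, Real.rpow_add_one ha0.ne']
    have h7 : p / 2 * a ^ (p - 2) * (2 * (s + a * b))
        = p * (a ^ (p - 2) * s) + p * a ^ (p - 1) * b := by
      rw [hapow]; ring
    -- final scalar claim
    have hfinal : (b - a) ^ p + p * a ^ (p - 1) * b ≤ a ^ p + 2 * b ^ p := by
      have hconv := convex_tangent_rpow (q := p) (u := b) (v := b - a) hp1.le hb hab
      have hba' : b - (b - a) = a := by ring
      rw [hba'] at hconv
      -- hconv : (b-a)^p + p * (b-a)^(p-1) * a ≤ b^p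
      suffices h8 : p * a ^ (p - 1) * b ≤ a ^ p + b ^ p + p * (b - a) ^ (p - 1) * a by linarith
      set r := a / b with hrdef
      have hr0 : 0 < r := div_pos ha0 hb0
      have hr1 : r < 1 / 2 := by rw [hrdef, div_lt_iff₀ hb0]; linarith
      have hab' : b - a = (1 - r) * b := by rw [hrdef]; field_simp
      have haeq : a = r * b := by rw [hrdef]; field_simp
      have e1 : a ^ (p - 1) = r ^ (p - 1) * b ^ (p - 1) := by
        rw [haeq, Real.mul_rpow hr0.le hb0.le]
      have e2 : b ^ (p - 1) * b = b ^ p := by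
        rw [← Real.rpow_add_one hb0.ne' (p - 1)]; congr 1; ring
      have e3 : a ^ p = r ^ p * b ^ p := by rw [haeq, Real.mul_rpow hr0.le hb0.le]
      have e4 : (b - a) ^ (p - 1) = (1 - r) ^ (p - 1) * b ^ (p - 1) := by
        rw [hab', Real.mul_rpow (by linarith) hb0.le]
      have hbp : (0:ℝ) ≤ b ^ p := Real.rpow_nonneg hb0.le p
      have hscal : p * r ^ (p - 1) ≤ r ^ p + 1 + p * r * (1 - r) ^ (p - 1) := by
        have hg : r ^ (p - 1) ≤ (p - 1) * r + (2 - p) := by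
          have := Real.geom_mean_le_arith_mean2_weighted (w₁ := p - 1) (w₂ := 2 - p)
            (p₁ := r) (p₂ := 1) (by linarith) (by linarith) hr0.le zero_le_one (by ring)
          simpa using this
        have hh : 1 - r ≤ (1 - r) ^ (p - 1) := by
          have := Real.rpow_le_rpow_of_exponent_ge (x := 1 - r) (by linarith) (by linarith)
            (by linarith : p - 1 ≤ 1)
          rwa [Real.rpow_one] at this
        have hrp : (0:ℝ) ≤ r ^ p := Real.rpow_nonneg hr0.le p
        have hmul1 : p * r ^ (p - 1) ≤ p * ((p - 1) * r + (2 - p)) :=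
          mul_le_mul_of_nonneg_left hg hp0.le
        have hmul2 : p * r * (1 - r) ≤ p * r * (1 - r) ^ (p - 1) :=
          mul_le_mul_of_nonneg_left hh (by positivity)
        have hpoly : p * ((p - 1) * r + (2 - p)) ≤ 1 + p * r * (1 - r) := by
          nlinarith [mul_nonneg (by linarith : (0:ℝ) ≤ 1 - 2 * r) (sq_nonneg (p - 1)),
            mul_nonneg hr0.le (by nlinarith [sq_nonneg (2 * p - 5 / 2)] : (0:ℝ) ≤ 2 * p ^ 2 - 5 * p + 4),
            mul_nonneg (mul_nonneg hp0.le hr0.le) (by linarith : (0:ℝ) ≤ 1 / 2 - r)]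
        linarith
      calc p * a ^ (p - 1) * b = (p * r ^ (p - 1)) * b ^ p := by
            rw [e1, ← e2]; ring
        _ ≤ (r ^ p + 1 + p * r * (1 - r) ^ (p - 1)) * b ^ p :=
            mul_le_mul_of_nonneg_right hscal hbp
        _ = a ^ p + b ^ p + p * (b - a) ^ (p - 1) * a := by
            rw [e3, e4, haeq, ← e2]; ring
    linarith

open RealInnerProductSpace in
lemma vec_key {p : ℝ} (hp1 : 1 < p) (hp2 : p ≤ 2) {F : Type*} [NormedAddCommGroup F]
    [InnerProductSpace ℝ F] (x y : F) :
    ‖x + y‖ ^ p ≤ ‖x‖ ^ p + p * (‖x‖ ^ (p - 2) * ⟪x, y⟫) + 2 * ‖y‖ ^ p := by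
  have h := scalar_key hp1 hp2 (norm_nonneg x) (norm_nonneg y) (abs_real_inner_le_norm x y)
  have e : ‖x + y‖ ^ p = (‖x‖ ^ 2 + 2 * ⟪x, y⟫ + ‖y‖ ^ 2) ^ (p / 2) := by
    rw [← norm_add_sq_real, sq_rpow_half p (norm_nonneg _)]
  rw [e]; exact h

lemma abs_coord_le_norm {d : ℕ} (u : EuclideanSpace ℝ (Fin d)) (i : Fin d) : |u i| ≤ ‖u‖ := by
  have h1 : u i = ⟪EuclideanSpace.single i (1:ℝ), u⟫ := by
    rw [EuclideanSpace.inner_single_left]; simp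
  calc |u i| = |⟪EuclideanSpace.single i (1:ℝ), u⟫| := by rw [h1]
    _ ≤ ‖EuclideanSpace.single i (1:ℝ)‖ * ‖u‖ := abs_real_inner_le_norm _ _
    _ = ‖u‖ := by rw [EuclideanSpace.norm_single]; simp

lemma integral_inner_eq_zero
    {Ω : Type*} {m : MeasurableSpace Ω} [inst : MeasurableSpace Ω] (hm : m ≤ inst)
    (μ : Measure Ω) [IsProbabilityMeasure μ] {d : ℕ}
    {Y Z : Ω → EuclideanSpace ℝ (Fin d)}
    (hY : StronglyMeasurable[m] Y)
    (hZint : Integrable Z μ)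
    (hZcond : μ[Z | m] =ᵐ[μ] 0)
    (hprod : Integrable (fun ω => ‖Y ω‖ * ‖Z ω‖) μ) :
    ∫ ω, ⟪Y ω, Z ω⟫ ∂μ = 0 := by
  haveI : SigmaFinite (μ.trim hm) := by
    have := isFiniteMeasure_trim (μ := μ) hm
    infer_instance
  have hYmeas : Measurable Y := (hY.measurable).mono hm le_rfl
  have hZmeas : AEStronglyMeasurable Z μ := hZint.aestronglyMeasurable
  have hprodi : ∀ i : Fin d, Integrable (fun ω => Y ω i * Z ω i) μ := by
    intro i
    apply hprod.mono'
    · exact ((EuclideanSpace.proj (𝕜 := ℝ) i).continuous.comp_aestronglyMeasurable hYmeas.aestronglyMeasurable).mul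
        ((EuclideanSpace.proj (𝕜 := ℝ) i).continuous.comp_aestronglyMeasurable hZmeas)
    · filter_upwards with ω
      rw [Real.norm_eq_abs, abs_mul]
      exact mul_le_mul (abs_coord_le_norm _ i) (abs_coord_le_norm _ i) (abs_nonneg _)
        (norm_nonneg _)
  have key : ∀ i : Fin d, ∫ ω, Y ω i * Z ω i ∂μ = 0 := by
    intro i
    set L := EuclideanSpace.proj (𝕜 := ℝ) i with hL
    have hZi_int : Integrable (fun ω => Z ω i) μ := L.integrable_comp hZint
    have hYi_sm : StronglyMeasurable[m] (fun ω => Y ω i) :=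
      L.continuous.comp_stronglyMeasurable hY
    have hZi_cond : μ[(fun ω => Z ω i) | m] =ᵐ[μ] 0 := by
      refine (ae_eq_condExp_of_forall_setIntegral_eq hm hZi_int
        (fun s _ _ => (integrable_zero _ _ _).integrableOn) (fun s hs hμs => ?_)
        (StronglyMeasurable.aestronglyMeasurable stronglyMeasurable_zero)).symm
      have h2 : ∫ ω in s, Z ω ∂μ = ∫ ω in s, (μ[Z|m]) ω ∂μ :=
        (setIntegral_condExp hm hZint hs).symm
      have h3 : ∫ ω in s, (μ[Z|m]) ω ∂μ = 0 := by
        calc ∫ ω in s, (μ[Z|m]) ω ∂μ = ∫ ω in s, (0 : EuclideanSpace ℝ (Fin d)) ∂μ :=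
              integral_congr_ae (ae_restrict_of_ae hZcond)
          _ = 0 := integral_zero _ _
      have hZ0 : ∫ ω in s, Z ω ∂μ = 0 := by rw [h2, h3]
      calc ∫ x in s, (0:ℝ) ∂μ = 0 := by simp
        _ = L (∫ ω in s, Z ω ∂μ) := by rw [hZ0]; simp
        _ = ∫ ω in s, L (Z ω) ∂μ := (L.integral_comp_comm hZint.integrableOn).symm
        _ = ∫ ω in s, Z ω i ∂μ := rfl
    have pull : μ[(fun ω => Y ω i) * (fun ω => Z ω i) | m]
        =ᵐ[μ] (fun ω => Y ω i) * μ[(fun ω => Z ω i)|m] :=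
      condExp_mul_of_stronglyMeasurable_left hYi_sm (by exact hprodi i) hZi_int
    have hzero : μ[(fun ω => Y ω i) * (fun ω => Z ω i) | m] =ᵐ[μ] 0 := by
      refine pull.trans ?_
      filter_upwards [hZi_cond] with ω hω
      simp only [Pi.mul_apply, hω, Pi.zero_apply, mul_zero]
    calc ∫ ω, Y ω i * Z ω i ∂μ
        = ∫ ω, (μ[(fun ω => Y ω i) * (fun ω => Z ω i)|m]) ω ∂μ :=
          (integral_condExp hm).symm
      _ = ∫ ω, (0 : Ω → ℝ) ω ∂μ := integral_congr_ae hzero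
      _ = 0 := by simp
  have hinner : ∀ ω, ⟪Y ω, Z ω⟫ = ∑ i, Y ω i * Z ω i := by
    intro ω
    simp [PiLp.inner_apply, RCLike.inner_apply, mul_comm]
  calc ∫ ω, ⟪Y ω, Z ω⟫ ∂μ = ∫ ω, ∑ i, Y ω i * Z ω i ∂μ := by simp_rw [hinner]
    _ = ∑ i, ∫ ω, Y ω i * Z ω i ∂μ := integral_finset_sum _ (fun i _ => hprodi i)
    _ = 0 := by simp [key]

/-- Lemma 10 of Hübler et al.: if `X 0, …, X (n-1)` is a martingale
difference sequence in `ℝ^d` (each `X j` has zero conditional expectation given the σ-algebra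
generated by the previous variables) with `E[‖X j‖^p] < ∞` for `p ∈ (1, 2]`, then
`E[‖∑ j, X j‖^p] ≤ 2 ∑ j, E[‖X j‖^p]`. -/
theorem pth_moment_sum_mds_le
    {Ω : Type*} [MeasurableSpace Ω] (μ : Measure Ω) [IsProbabilityMeasure μ]
    {d n : ℕ} (p : ℝ) (hp1 : 1 < p) (hp2 : p ≤ 2)
    (X : Fin n → Ω → EuclideanSpace ℝ (Fin d))
    (hmeas : ∀ j, Measurable (X j))
    (hint : ∀ j, Integrable (X j) μ)
    (hmom_int : ∀ j, Integrable (fun ω => ‖X j ω‖ ^ p) μ)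
    (hmds : ∀ j : Fin n,
      μ[X j | ⨆ i : Fin n, ⨆ _ : (i : ℕ) < (j : ℕ), MeasurableSpace.comap (X i) inferInstance]
        =ᵐ[μ] 0) :
    ∫ ω, ‖∑ j, X j ω‖ ^ p ∂μ ≤ 2 * ∑ j, ∫ ω, ‖X j ω‖ ^ p ∂μ := by
  have hp0 : (0:ℝ) < p := by linarith
  set P : ℝ≥0∞ := ENNReal.ofReal p with hPdef
  have hP0 : P ≠ 0 := by simp [hPdef, ENNReal.ofReal_eq_zero]; linarith
  have hPtop : P ≠ ∞ := ENNReal.ofReal_ne_top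
  have hPtoReal : P.toReal = p := ENNReal.toReal_ofReal hp0.le
  -- each X j is in L^p
  have hXLp : ∀ j, MemLp (X j) P μ := by
    intro j
    have h1 : MemLp (fun ω => ‖X j ω‖ ^ p) 1 μ := memLp_one_iff_integrable.mpr (hmom_int j)
    have h2 : MemLp (fun ω => ‖X j ω‖ ^ P.toReal) (P / P) μ := by
      rw [ENNReal.div_self hP0 hPtop, hPtoReal]; exact h1
    exact (memLp_norm_rpow_iff (hmeas j).aestronglyMeasurable hP0 hPtop).mp h2
  -- partial sums
  set S : ℕ → Ω → EuclideanSpace ℝ (Fin d) :=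
    fun k ω => ∑ i ∈ Finset.univ.filter (fun i : Fin n => (i:ℕ) < k), X i ω with hSdef
  have hSmeas : ∀ k, Measurable (S k) :=
    fun k => Finset.measurable_sum _ (fun i _ => hmeas i)
  have hSLp : ∀ k, MemLp (S k) P μ :=
    fun k => memLp_finsetSum _ (fun i _ => hXLp i)
  have hSnormint : ∀ k, Integrable (fun ω => ‖S k ω‖ ^ p) μ := by
    intro k
    have := (hSLp k).integrable_norm_rpow hP0 hPtop
    rwa [hPtoReal] at this
  -- the filtration
  set mk : ℕ → MeasurableSpace Ω :=
    fun k => ⨆ i : Fin n, ⨆ _ : (i : ℕ) < k, MeasurableSpace.comap (X i) inferInstance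
    with hmkdef
  have hmk_le : ∀ k, mk k ≤ ‹MeasurableSpace Ω› :=
    fun k => iSup_le fun i => iSup_le fun _ => (hmeas i).comap_le
  have hXmk : ∀ (k : ℕ) (i : Fin n), (i : ℕ) < k → Measurable[mk k] (X i) := by
    intro k i hik
    apply Measurable.of_comap_le
    exact le_iSup_of_le i (le_iSup_of_le hik le_rfl)
  have hSmk : ∀ k, Measurable[mk k] (S k) := by
    intro k
    apply Finset.measurable_sum
    intro i hi
    exact hXmk k i (by simpa using hi)
  -- the gradient-type map
  set G : EuclideanSpace ℝ (Fin d) → EuclideanSpace ℝ (Fin d) :=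
    fun x => ‖x‖ ^ (p - 2) • x with hGdef
  have hGmeas : Measurable G := (measurable_norm.pow_const (p - 2)).smul measurable_id
  have hGnorm : ∀ x : EuclideanSpace ℝ (Fin d), ‖G x‖ = ‖x‖ ^ (p - 1) := by
    intro x
    by_cases hx : x = 0
    · simp [hGdef, hx, Real.zero_rpow (by linarith : p - 1 ≠ 0)]
    · have hxn : (0:ℝ) < ‖x‖ := norm_pos_iff.mpr hx
      rw [hGdef]
      simp only [norm_smul, Real.norm_eq_abs, abs_of_nonneg (Real.rpow_nonneg (norm_nonneg x) _)]
      rw [← Real.rpow_add_one hxn.ne' (p - 2)]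
      congr 1; ring
  -- product integrability
  have hprodint : ∀ (k : ℕ) (j : Fin n),
      Integrable (fun ω => ‖S k ω‖ ^ (p - 1) * ‖X j ω‖) μ := by
    intro k j
    have hq : MemLp (fun ω => ‖S k ω‖ ^ (p - 1)) (P / ENNReal.ofReal (p - 1)) μ := by
      have := (hSLp k).norm_rpow_div (ENNReal.ofReal (p - 1))
      rwa [ENNReal.toReal_ofReal (by linarith : (0:ℝ) ≤ p - 1)] at this
    have hXn : MemLp (fun ω => ‖X j ω‖) P μ := (hXLp j).norm
    have hENN : (1:ℝ≥0∞) / 1 = 1 / (P / ENNReal.ofReal (p - 1)) + 1 / P := by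
      have hQ0 : ENNReal.ofReal (p - 1) ≠ 0 := by
        simp [ENNReal.ofReal_eq_zero]; linarith
      have h1 : (1:ℝ≥0∞) / (P / ENNReal.ofReal (p - 1)) = ENNReal.ofReal (p - 1) / P := by
        rw [one_div, ENNReal.inv_div (Or.inl ENNReal.ofReal_ne_top) (Or.inl hQ0)]
      have h2 : ENNReal.ofReal (p - 1) / P + 1 / P = (ENNReal.ofReal (p - 1) + 1) / P :=
        ENNReal.div_add_div_same
      have h3 : ENNReal.ofReal (p - 1) + 1 = P := by
        rw [← ENNReal.ofReal_one, ← ENNReal.ofReal_add (by linarith) zero_le_one, hPdef]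
        norm_num
      rw [h1, h2, h3, ENNReal.div_self hP0 hPtop]
      simp
    haveI : ENNReal.HolderTriple (P / ENNReal.ofReal (p - 1)) P 1 := ⟨by simpa [one_div] using hENN.symm⟩
    have := hXn.smul (φ := fun ω => ‖S k ω‖ ^ (p - 1)) (r := 1) hq
    rw [memLp_one_iff_integrable] at this
    exact this
  -- zero expectation of the cross term
  have hzero : ∀ (k : ℕ) (hk : k < n),
      ∫ ω, ⟪G (S k ω), X ⟨k, hk⟩ ω⟫ ∂μ = 0 := by
    intro k hk
    apply integral_inner_eq_zero (hmk_le k) μ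
    · exact ((hGmeas.comp (hSmk k)).stronglyMeasurable)
    · exact hint _
    · exact hmds ⟨k, hk⟩
    · simpa only [hGnorm] using hprodint k ⟨k, hk⟩
  -- cross-term integrability (as inner products)
  have hinner_int : ∀ (k : ℕ) (j : Fin n),
      Integrable (fun ω => ‖S k ω‖ ^ (p - 2) * ⟪S k ω, X j ω⟫) μ := by
    intro k j
    have heq : (fun ω => ‖S k ω‖ ^ (p - 2) * ⟪S k ω, X j ω⟫)
        = fun ω => ⟪G (S k ω), X j ω⟫ := by
      funext ω
      rw [hGdef]
      exact (real_inner_smul_left _ _ _).symm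
    rw [heq]
    apply (hprodint k j).mono'
    · exact ((hGmeas.comp (hSmeas k)).inner (hmeas j)).aestronglyMeasurable
    · filter_upwards with ω
      rw [Real.norm_eq_abs]
      calc |⟪G (S k ω), X j ω⟫| ≤ ‖G (S k ω)‖ * ‖X j ω‖ := abs_real_inner_le_norm _ _
        _ = ‖S k ω‖ ^ (p - 1) * ‖X j ω‖ := by rw [hGnorm]
  -- main induction
  have main : ∀ k, k ≤ n → ∫ ω, ‖S k ω‖ ^ p ∂μ
      ≤ 2 * ∑ i ∈ Finset.univ.filter (fun i : Fin n => (i:ℕ) < k), ∫ ω, ‖X i ω‖ ^ p ∂μ := by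
    intro k
    induction k with
    | zero =>
      intro _
      have hS0 : ∀ ω, S 0 ω = 0 := by
        intro ω; rw [hSdef]; simp
      simp only [hS0, norm_zero, Real.zero_rpow hp0.ne', integral_zero]
      simp
    | succ k ih =>
      intro hk1
      have hk : k < n := hk1
      have ihk := ih (le_of_lt hk)
      set j : Fin n := ⟨k, hk⟩ with hjdef
      have hfil : Finset.univ.filter (fun i : Fin n => (i:ℕ) < k + 1)
          = insert j (Finset.univ.filter (fun i : Fin n => (i:ℕ) < k)) := by
        ext i
        simp only [Finset.mem_filter, Finset.mem_univ, true_and, Finset.mem_insert,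
          Nat.lt_succ_iff_lt_or_eq, Fin.ext_iff, hjdef]
        tauto
      have hjnot : j ∉ Finset.univ.filter (fun i : Fin n => (i:ℕ) < k) := by simp [hjdef]
      have hSsucc : ∀ ω, S (k+1) ω = S k ω + X j ω := by
        intro ω
        rw [hSdef]
        simp only
        rw [hfil, Finset.sum_insert hjnot]
        rw [add_comm]
      have pointwise : ∀ ω, ‖S (k+1) ω‖ ^ p
          ≤ ‖S k ω‖ ^ p + p * (‖S k ω‖ ^ (p - 2) * ⟪S k ω, X j ω⟫) + 2 * ‖X j ω‖ ^ p := by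
        intro ω
        rw [hSsucc ω]
        exact vec_key hp1 hp2 _ _
      have I1 := hSnormint k
      have I2 := hinner_int k j
      have I3 := hmom_int j
      have I4 := hSnormint (k+1)
      have hintle : ∫ ω, ‖S (k+1) ω‖ ^ p ∂μ
          ≤ ∫ ω, (‖S k ω‖ ^ p + p * (‖S k ω‖ ^ (p - 2) * ⟪S k ω, X j ω⟫)
              + 2 * ‖X j ω‖ ^ p) ∂μ :=
        integral_mono I4 ((I1.add (I2.const_mul p)).add (I3.const_mul 2)) pointwise
      have hsplit : ∫ ω, (‖S k ω‖ ^ p + p * (‖S k ω‖ ^ (p - 2) * ⟪S k ω, X j ω⟫)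
              + 2 * ‖X j ω‖ ^ p) ∂μ
          = ∫ ω, ‖S k ω‖ ^ p ∂μ + p * ∫ ω, ‖S k ω‖ ^ (p - 2) * ⟪S k ω, X j ω⟫ ∂μ
              + 2 * ∫ ω, ‖X j ω‖ ^ p ∂μ := by
        have I2' : Integrable (fun ω => p * (‖S k ω‖ ^ (p - 2) * ⟪S k ω, X j ω⟫)) μ :=
          I2.const_mul p
        have I12 : Integrable
            (fun ω => ‖S k ω‖ ^ p + p * (‖S k ω‖ ^ (p - 2) * ⟪S k ω, X j ω⟫)) μ := I1.add I2'
        have I3' : Integrable (fun ω => 2 * ‖X j ω‖ ^ p) μ := I3.const_mul 2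
        rw [integral_add I12 I3', integral_add I1 I2', integral_const_mul, integral_const_mul]
      have hcross : ∫ ω, ‖S k ω‖ ^ (p - 2) * ⟪S k ω, X j ω⟫ ∂μ = 0 := by
        have heq : (fun ω => ‖S k ω‖ ^ (p - 2) * ⟪S k ω, X j ω⟫)
            = fun ω => ⟪G (S k ω), X j ω⟫ := by
          funext ω
          rw [hGdef]
          exact (real_inner_smul_left _ _ _).symm
        rw [heq]
        exact hzero k hk
      have hsum : ∑ i ∈ Finset.univ.filter (fun i : Fin n => (i:ℕ) < k + 1),
            ∫ ω, ‖X i ω‖ ^ p ∂μ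
          = ∫ ω, ‖X j ω‖ ^ p ∂μ
            + ∑ i ∈ Finset.univ.filter (fun i : Fin n => (i:ℕ) < k), ∫ ω, ‖X i ω‖ ^ p ∂μ := by
        rw [hfil, Finset.sum_insert hjnot]
      rw [hsum]
      rw [hsplit, hcross] at hintle
      linarith
  -- conclusion
  have hSn : ∀ ω, S n ω = ∑ j, X j ω := by
    intro ω
    rw [hSdef]
    simp only
    congr 1
    apply Finset.filter_true_of_mem
    intro i _
    exact i.isLt
  have hfiln : Finset.univ.filter (fun i : Fin n => (i:ℕ) < n) = Finset.univ := by
    apply Finset.filter_true_of_mem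
    intro i _
    exact i.isLt
  have := main n le_rfl
  rw [hfiln] at this
  calc ∫ ω, ‖∑ j, X j ω‖ ^ p ∂μ = ∫ ω, ‖S n ω‖ ^ p ∂μ := by simp_rw [hSn]
    _ ≤ 2 * ∑ j, ∫ ω, ‖X j ω‖ ^ p ∂μ := this
end

section
/- Let p ∈ (1, 2], let ∇F(x, y; ξ) be an unbiased stochastic gradient oracle with E[∇F(x, y; ξ)] = ∇f(x, y) and E[‖∇F(x, y; ξ) − ∇f(x, y)‖^p] ≤ σ^p, and let g := (1/M) Σ_{i=1}^M ∇F(x, y; ξ_i) be the minibatch estimator built from M i.i.d. samples ξ_1, …, ξ_M. Then E[‖g − ∇f(x, y)‖] ≤ 2σ / M^{(p−1)/p}. -/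
open MeasureTheory ProbabilityTheory

open Real

section Auxiliary

private lemma sq_rpow_aux {a : ℝ} (ha : 0 ≤ a) (c : ℝ) : (a ^ 2) ^ c = a ^ (2 * c) := by
  rw [← Real.rpow_natCast a 2, ← Real.rpow_mul ha]
  norm_num

private lemma rpow_tangent {q A s : ℝ} (hq0 : 0 ≤ q) (hq1 : q ≤ 1) (hA : 0 < A) (hs : 0 ≤ s) :
    s ^ q ≤ A ^ q + q * A ^ (q - 1) * (s - A) := by
  have hAq : (0:ℝ) < A ^ q := Real.rpow_pos_of_pos hA q
  have h1 : s ^ q = A ^ q * (s / A) ^ q := by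
    rw [Real.div_rpow hs hA.le]
    field_simp
  have h2 : (s / A) ^ q ≤ 1 + q * (s / A - 1) := by
    have hge : (-1:ℝ) ≤ s / A - 1 := by
      have : 0 ≤ s / A := div_nonneg hs hA.le
      linarith
    have := rpow_one_add_le_one_add_mul_self hge hq0 hq1
    simpa using this
  have h3 : A ^ (q - 1) = A ^ q / A := by
    rw [Real.rpow_sub hA, Real.rpow_one]
  calc s ^ q = A ^ q * (s / A) ^ q := h1
    _ ≤ A ^ q * (1 + q * (s / A - 1)) := by
        exact mul_le_mul_of_nonneg_left h2 hAq.le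
    _ = A ^ q + q * (A ^ q / A) * (s - A) := by
        field_simp
    _ = A ^ q + q * A ^ (q - 1) * (s - A) := by rw [h3]

private lemma young_p {p a b : ℝ} (hp : 1 < p) (ha : 0 ≤ a) (hb : 0 ≤ b) :
    p * (a ^ (p - 1) * b) ≤ (p - 1) * a ^ p + b ^ p := by
  have hpq : Real.HolderConjugate p (Real.conjExponent p) := Real.HolderConjugate.conjExponent hp
  have h := Real.young_inequality_of_nonneg (Real.rpow_nonneg ha (p-1)) hb hpq.symm
  have hc : Real.conjExponent p = p / (p - 1) := rfl
  have hne : p - 1 ≠ 0 := by linarith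
  have hp0 : p ≠ 0 := by linarith
  have hpow : (a ^ (p-1)) ^ (p / (p-1)) = a ^ p := by
    rw [← Real.rpow_mul ha]
    congr 1
    field_simp
  rw [hc, hpow] at h
  -- h : a ^ (p-1) * b ≤ a ^ p / (p / (p-1)) + b ^ p / p
  have hdiv : a ^ p / (p / (p-1)) = (p - 1) * a ^ p / p := by
    field_simp
  rw [hdiv] at h
  have := mul_le_mul_of_nonneg_left h (le_of_lt (lt_trans one_pos hp))
  calc p * (a ^ (p-1) * b) ≤ p * ((p-1) * a ^ p / p + b ^ p / p) := this
    _ = (p - 1) * a ^ p + b ^ p := by field_simp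

private lemma key_real {p a b t : ℝ} (hp1 : 1 < p) (hp2 : p ≤ 2) (ha : 0 ≤ a) (hb : 0 ≤ b)
    (ht : |t| ≤ a * b) :
    (a ^ 2 + 2 * t + b ^ 2) ^ (p / 2) ≤ a ^ p + p * (a ^ (p - 2) * t) + 2 * b ^ p := by
  have habs := abs_le.1 ht
  have hs : 0 ≤ a ^ 2 + 2 * t + b ^ 2 := by nlinarith [habs.1, sq_nonneg (a - b)]
  have hq0 : (0:ℝ) ≤ p / 2 := by linarith
  have hq1 : p / 2 ≤ 1 := by linarith
  rcases eq_or_lt_of_le hb with hb0 | hb0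
  · -- b = 0
    have hb0 : b = 0 := hb0.symm
    have ht0 : t = 0 := by
      rw [hb0] at ht; simp at ht
      exact abs_eq_zero.1 (le_antisymm (by simpa using ht) (abs_nonneg t))
    subst hb0; subst ht0
    rw [Real.zero_rpow (by positivity : p ≠ 0)]
    have : (a ^ 2 + 2 * 0 + 0 ^ 2) = a ^ 2 := by ring
    rw [this, sq_rpow_aux ha]
    have : 2 * (p / 2) = p := by ring
    rw [this]
    simp
  rcases eq_or_lt_of_le ha with ha0 | ha0
  · -- a = 0
    have ha0 : a = 0 := ha0.symm
    have ht0 : t = 0 := by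
      rw [ha0] at ht; simp at ht
      exact abs_eq_zero.1 (le_antisymm (by simpa using ht) (abs_nonneg t))
    subst ha0; subst ht0
    have : ((0:ℝ) ^ 2 + 2 * 0 + b ^ 2) = b ^ 2 := by ring
    rw [this, sq_rpow_aux hb]
    have h2 : 2 * (p / 2) = p := by ring
    rw [h2, Real.zero_rpow (by positivity : p ≠ 0)]
    have : (0:ℝ) ≤ b ^ p := Real.rpow_nonneg hb p
    nlinarith
  -- main case 0 < a, 0 < b
  have hbp : (0:ℝ) ≤ b ^ p := Real.rpow_nonneg hb p
  have hap : (0:ℝ) ≤ a ^ p := Real.rpow_nonneg ha p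
  rcases le_or_gt b a with hba | hab
  · -- b ≤ a : tangent at a^2
    have htan := rpow_tangent hq0 hq1 (by positivity : (0:ℝ) < a ^ 2) hs
    have e1 : (a ^ 2) ^ (p / 2) = a ^ p := by
      rw [sq_rpow_aux ha]
      congr 1; ring
    have e2 : (a ^ 2) ^ (p / 2 - 1) = a ^ (p - 2) := by
      rw [sq_rpow_aux ha]
      congr 1; ring
    rw [e1, e2] at htan
    have hexp : a ^ (p - 2) ≤ b ^ (p - 2) :=
      Real.rpow_le_rpow_of_nonpos hb0 hba (by linarith)
    have hbb : b ^ (p - 2) * b ^ 2 = b ^ p := by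
      rw [← Real.rpow_natCast b 2, ← Real.rpow_add hb0]
      norm_num
    have e3 : a ^ (p - 2) * b ^ 2 ≤ b ^ p := by
      calc a ^ (p - 2) * b ^ 2 ≤ b ^ (p - 2) * b ^ 2 :=
            mul_le_mul_of_nonneg_right hexp (sq_nonneg b)
        _ = b ^ p := hbb
    calc (a ^ 2 + 2 * t + b ^ 2) ^ (p / 2)
        ≤ a ^ p + p / 2 * a ^ (p - 2) * (a ^ 2 + 2 * t + b ^ 2 - a ^ 2) := htan
      _ = a ^ p + p * (a ^ (p - 2) * t) + p / 2 * (a ^ (p - 2) * b ^ 2) := by ring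
      _ ≤ a ^ p + p * (a ^ (p - 2) * t) + 2 * b ^ p := by nlinarith [e3, mul_nonneg (Real.rpow_nonneg ha (p-2)) (sq_nonneg b)]
  · -- a < b : tangent at b^2
    have htan := rpow_tangent hq0 hq1 (by positivity : (0:ℝ) < b ^ 2) hs
    have e1 : (b ^ 2) ^ (p / 2) = b ^ p := by
      rw [sq_rpow_aux hb]
      congr 1; ring
    have e2 : (b ^ 2) ^ (p / 2 - 1) = b ^ (p - 2) := by
      rw [sq_rpow_aux hb]
      congr 1; ring
    rw [e1, e2] at htan
    have hexp : b ^ (p - 2) ≤ a ^ (p - 2) :=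
      Real.rpow_le_rpow_of_nonpos ha0 hab.le (by linarith)
    have hapm : a ^ (p - 2) * a = a ^ (p - 1) := by
      nth_rewrite 2 [← Real.rpow_one a]
      rw [← Real.rpow_add ha0]
      congr 1; ring
    have hbpm : b ^ (p - 2) * b = b ^ (p - 1) := by
      nth_rewrite 2 [← Real.rpow_one b]
      rw [← Real.rpow_add hb0]
      congr 1; ring
    have hy : p * (a ^ (p - 1) * b) ≤ (p - 1) * a ^ p + b ^ p := young_p hp1 ha hb
    -- cross term bound: t * (b^(p-2) - a^(p-2)) ≤ a*b*(a^(p-2) - b^(p-2))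
    have hcross : t * (b ^ (p - 2) - a ^ (p - 2)) ≤ a * b * (a ^ (p - 2) - b ^ (p - 2)) := by
      have hc : 0 ≤ a ^ (p - 2) - b ^ (p - 2) := by linarith
      have h1 : -t ≤ a * b := by linarith [habs.1]
      nlinarith [mul_le_mul_of_nonneg_right h1 hc]
    -- (p/2) * (b^(p-2) * a^2) ≤ p * (a * b^(p-1))
    have harea : p / 2 * (b ^ (p - 2) * a ^ 2) ≤ p * (a * b ^ (p - 1)) := by
      have hbpm2 : 0 ≤ b ^ (p - 2) := Real.rpow_nonneg hb _
      have h1 : b ^ (p - 2) * a ^ 2 ≤ a * b ^ (p - 1) := by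
        have : a * a ≤ a * b := mul_le_mul_of_nonneg_left hab.le ha
        calc b ^ (p - 2) * a ^ 2 = (a * a) * b ^ (p - 2) := by ring
          _ ≤ (a * b) * b ^ (p - 2) := mul_le_mul_of_nonneg_right this hbpm2
          _ = a * (b ^ (p - 2) * b) := by ring
          _ = a * b ^ (p - 1) := by rw [hbpm]
      have hY : 0 ≤ a * b ^ (p - 1) := mul_nonneg ha (Real.rpow_nonneg hb _)
      have h2 := mul_le_mul_of_nonneg_left h1 (by linarith : (0:ℝ) ≤ p / 2)
      have h3 : p / 2 * (a * b ^ (p - 1)) ≤ p * (a * b ^ (p - 1)) :=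
        mul_le_mul_of_nonneg_right (by linarith) hY
      linarith
    -- assemble
    have hexpand : a * b * (a ^ (p - 2) - b ^ (p - 2)) = a ^ (p - 1) * b - a * b ^ (p - 1) := by
      rw [← hapm, ← hbpm]; ring
    rw [hexpand] at hcross
    calc (a ^ 2 + 2 * t + b ^ 2) ^ (p / 2)
        ≤ b ^ p + p / 2 * b ^ (p - 2) * (a ^ 2 + 2 * t + b ^ 2 - b ^ 2) := htan
      _ = b ^ p + p / 2 * (b ^ (p - 2) * a ^ 2) + p * (a ^ (p - 2) * t)
            + p * (t * (b ^ (p - 2) - a ^ (p - 2))) := by ring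
      _ ≤ b ^ p + p * (a * b ^ (p - 1)) + p * (a ^ (p - 2) * t)
            + p * (a ^ (p - 1) * b - a * b ^ (p - 1)) := by
            have hp0 : (0:ℝ) < p := by linarith
            have := mul_le_mul_of_nonneg_left hcross hp0.le
            linarith [harea]
      _ = b ^ p + p * (a ^ (p - 2) * t) + p * (a ^ (p - 1) * b) := by ring
      _ ≤ b ^ p + p * (a ^ (p - 2) * t) + ((p - 1) * a ^ p + b ^ p) := by linarith
      _ ≤ a ^ p + p * (a ^ (p - 2) * t) + 2 * b ^ p := by nlinarith

private lemma norm_add_rpow_le' {E : Type*} [NormedAddCommGroup E] [InnerProductSpace ℝ E]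
    {p : ℝ} (hp1 : 1 < p) (hp2 : p ≤ 2) (x y : E) :
    ‖x + y‖ ^ p ≤ ‖x‖ ^ p + p * (‖x‖ ^ (p - 2) * (inner ℝ x y : ℝ)) + 2 * ‖y‖ ^ p := by
  have hxy : ‖x + y‖ ^ (2:ℕ) = ‖x‖ ^ 2 + 2 * (inner ℝ x y : ℝ) + ‖y‖ ^ 2 := norm_add_sq_real x y
  have h1 : ‖x + y‖ ^ p = (‖x‖ ^ 2 + 2 * (inner ℝ x y : ℝ) + ‖y‖ ^ 2) ^ (p / 2) := by
    rw [← hxy, ← Real.rpow_natCast (‖x + y‖) 2, ← Real.rpow_mul (norm_nonneg _)]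
    congr 1; ring
  rw [h1]
  exact key_real hp1 hp2 (norm_nonneg x) (norm_nonneg y) (abs_real_inner_le_norm x y)

private lemma rpow_add_le_four' {p u w : ℝ} (hp1 : 1 ≤ p) (hp2 : p ≤ 2) (hu : 0 ≤ u) (hw : 0 ≤ w) :
    (u + w) ^ p ≤ 4 * u ^ p + 4 * w ^ p := by
  have h4 : (2:ℝ) ^ p ≤ 4 := by
    calc (2:ℝ) ^ p ≤ (2:ℝ) ^ (2:ℝ) := Real.rpow_le_rpow_of_exponent_le one_le_two hp2
      _ = 4 := by
        rw [show ((2:ℝ):ℝ) = ((2:ℕ):ℝ) by norm_num, Real.rpow_natCast]; norm_num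
  rcases le_total u w with h | h
  · have h1 : (u + w) ^ p ≤ (2 * w) ^ p :=
      Real.rpow_le_rpow (by linarith) (by linarith) (by linarith)
    have h2 : (2 * w) ^ p = 2 ^ p * w ^ p := Real.mul_rpow (by norm_num) hw
    have := Real.rpow_nonneg hu p
    have hwp := Real.rpow_nonneg hw p
    nlinarith
  · have h1 : (u + w) ^ p ≤ (2 * u) ^ p :=
      Real.rpow_le_rpow (by linarith) (by linarith) (by linarith)
    have h2 : (2 * u) ^ p = 2 ^ p * u ^ p := Real.mul_rpow (by norm_num) hu
    have := Real.rpow_nonneg hw p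
    have hup := Real.rpow_nonneg hu p
    nlinarith

private lemma rpow_sub_one_le' {p c : ℝ} (hp1 : 1 ≤ p) (hc : 0 ≤ c) :
    c ^ (p - 1) ≤ 1 + c ^ p := by
  rcases le_total c 1 with h | h
  · have : c ^ (p - 1) ≤ 1 := Real.rpow_le_one hc h (by linarith)
    have := Real.rpow_nonneg hc p
    linarith
  · have : c ^ (p - 1) ≤ c ^ p := Real.rpow_le_rpow_of_exponent_le h (by linarith)
    linarith

private lemma coord_abs_le_norm' {d : ℕ} (x : EuclideanSpace ℝ (Fin d)) (j : Fin d) :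
    |x j| ≤ ‖x‖ := by
  rw [EuclideanSpace.norm_eq]
  rw [show |x j| = Real.sqrt (|x j| ^ 2) by rw [Real.sqrt_sq_eq_abs, abs_abs]]
  apply Real.sqrt_le_sqrt
  have : |x j| ^ 2 = ‖x j‖ ^ 2 := by rw [Real.norm_eq_abs]
  rw [this]
  exact Finset.single_le_sum (f := fun i => ‖x i‖ ^ 2) (fun i _ => sq_nonneg _) (Finset.mem_univ j)

private lemma measurable_rpow_const_of_nonneg {α : Type*} [MeasurableSpace α] {g : α → ℝ}
    (hg : Measurable g) (hg0 : ∀ a, 0 ≤ g a) (c : ℝ) : Measurable fun a => g a ^ c := by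
  have heq : (fun a => g a ^ c) =
      fun a => if g a = 0 then (0:ℝ) ^ c else Real.exp (Real.log (g a) * c) := by
    funext a
    by_cases h : g a = 0
    · simp [h]
    · have hpos : 0 < g a := lt_of_le_of_ne (hg0 a) (Ne.symm h)
      rw [if_neg h, Real.rpow_def_of_pos hpos]
  rw [heq]
  exact Measurable.ite (hg (measurableSet_singleton 0)) measurable_const
    (Real.measurable_exp.comp ((Real.measurable_log.comp hg).mul_const c))

private lemma sum_rpow_bound {Ω : Type*} [MeasurableSpace Ω] (μ : Measure Ω)
    [IsProbabilityMeasure μ]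
    {d M : ℕ} {p : ℝ} (hp1 : 1 < p) (hp2 : p ≤ 2)
    (Y : Fin M → Ω → EuclideanSpace ℝ (Fin d))
    (hmeas : ∀ i, Measurable (Y i))
    (hindep : iIndepFun Y μ)
    (hint : ∀ i, Integrable (Y i) μ)
    (hmean : ∀ i, ∫ ω, Y i ω ∂μ = 0)
    (hmom_int : ∀ i, Integrable (fun ω => ‖Y i ω‖ ^ p) μ) :
    ∀ s : Finset (Fin M),
      Integrable (fun ω => ‖∑ i ∈ s, Y i ω‖ ^ p) μ ∧
      ∫ ω, ‖∑ i ∈ s, Y i ω‖ ^ p ∂μ ≤ 2 * ∑ i ∈ s, ∫ ω, ‖Y i ω‖ ^ p ∂μ := by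
  have hp0 : (0:ℝ) < p := by linarith
  intro s
  induction s using Finset.cons_induction with
  | empty =>
    have he : (fun ω => ‖∑ i ∈ (∅ : Finset (Fin M)), Y i ω‖ ^ p) = fun _ => (0:ℝ) := by
      funext ω; simp [Real.zero_rpow hp0.ne']
    rw [he]
    refine ⟨integrable_const 0, ?_⟩
    simp
  | cons i s hi ih =>
    obtain ⟨ihInt, ihLe⟩ := ih
    set S : Ω → EuclideanSpace ℝ (Fin d) := fun ω => ∑ j ∈ s, Y j ω with hS
    have ihInt' : Integrable (fun ω => ‖S ω‖ ^ p) μ := ihInt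
    have ihLe' : ∫ ω, ‖S ω‖ ^ p ∂μ ≤ 2 * ∑ j ∈ s, ∫ ω, ‖Y j ω‖ ^ p ∂μ := ihLe
    have hSmeas : Measurable S := Finset.measurable_sum s (fun j _ => hmeas j)
    have hZmeas : Measurable (Y i) := hmeas i
    have hSnorm : Measurable fun ω => ‖S ω‖ := hSmeas.norm
    have hindepSZ : IndepFun S (Y i) μ := by
      have h := hindep.indepFun_finsetSum_of_notMem hmeas hi
      have heq : (∑ j ∈ s, Y j) = S := by
        funext ω; simp [hS, Finset.sum_apply]
      rwa [heq] at h
    have hsum_eq : ∀ ω, ∑ j ∈ Finset.cons i s hi, Y j ω = Y i ω + S ω := by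
      intro ω; rw [Finset.sum_cons]
    have hfmeas : Measurable fun ω => ‖Y i ω + S ω‖ ^ p :=
      measurable_rpow_const_of_nonneg (hZmeas.add hSmeas).norm (fun ω => norm_nonneg _) p
    have hfint : Integrable (fun ω => ‖Y i ω + S ω‖ ^ p) μ := by
      refine Integrable.mono' ((ihInt'.const_mul 4).add ((hmom_int i).const_mul 4))
        hfmeas.aestronglyMeasurable (ae_of_all _ fun ω => ?_)
      rw [Real.norm_eq_abs, abs_of_nonneg (Real.rpow_nonneg (norm_nonneg _) p)]
      calc ‖Y i ω + S ω‖ ^ p ≤ (‖S ω‖ + ‖Y i ω‖) ^ p := by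
            apply Real.rpow_le_rpow (norm_nonneg _) _ hp0.le
            rw [add_comm (‖S ω‖)]
            exact norm_add_le _ _
        _ ≤ 4 * ‖S ω‖ ^ p + 4 * ‖Y i ω‖ ^ p :=
            rpow_add_le_four' hp1.le hp2 (norm_nonneg _) (norm_nonneg _)
    set B : Ω → ℝ := fun ω => p * (‖S ω‖ ^ (p - 2) * (inner ℝ (S ω) (Y i ω) : ℝ)) with hB
    have hBmeas : Measurable B :=
      ((measurable_rpow_const_of_nonneg hSnorm (fun ω => norm_nonneg _) (p-2)).mul
        (hSmeas.inner hZmeas)).const_mul p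
    have hBbound : ∀ ω, |B ω| ≤ (p - 1) * ‖S ω‖ ^ p + ‖Y i ω‖ ^ p := by
      intro ω
      have hr1 : (0:ℝ) ≤ (p - 1) * ‖S ω‖ ^ p :=
        mul_nonneg (by linarith) (Real.rpow_nonneg (norm_nonneg _) _)
      have hr2 : (0:ℝ) ≤ ‖Y i ω‖ ^ p := Real.rpow_nonneg (norm_nonneg _) _
      rcases eq_or_lt_of_le (norm_nonneg (S ω)) with h0 | h0
      · have hz : S ω = 0 := by rw [← norm_eq_zero]; exact h0.symm
        have hzero : B ω = 0 := by simp [hB, hz]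
        rw [hzero, abs_zero]
        linarith
      · have hstep : ‖S ω‖ ^ (p - 2) * ‖S ω‖ = ‖S ω‖ ^ (p - 1) := by
          nth_rewrite 2 [← Real.rpow_one (‖S ω‖)]
          rw [← Real.rpow_add h0]
          congr 1; ring
        have h1 : |B ω| ≤ p * (‖S ω‖ ^ (p - 1) * ‖Y i ω‖) := by
          simp only [hB]
          rw [abs_mul, abs_of_nonneg hp0.le, abs_mul,
            abs_of_nonneg (Real.rpow_nonneg (norm_nonneg _) _)]
          have h2 : |(inner ℝ (S ω) (Y i ω) : ℝ)| ≤ ‖S ω‖ * ‖Y i ω‖ :=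
            abs_real_inner_le_norm _ _
          calc p * (‖S ω‖ ^ (p-2) * |(inner ℝ (S ω) (Y i ω) : ℝ)|)
              ≤ p * (‖S ω‖ ^ (p-2) * (‖S ω‖ * ‖Y i ω‖)) := by
                apply mul_le_mul_of_nonneg_left _ hp0.le
                exact mul_le_mul_of_nonneg_left h2 (Real.rpow_nonneg (norm_nonneg _) _)
            _ = p * (‖S ω‖ ^ (p-1) * ‖Y i ω‖) := by rw [← hstep]; ring
        calc |B ω| ≤ p * (‖S ω‖ ^ (p - 1) * ‖Y i ω‖) := h1
          _ ≤ (p - 1) * ‖S ω‖ ^ p + ‖Y i ω‖ ^ p :=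
              young_p hp1 (norm_nonneg _) (norm_nonneg _)
    have hBint : Integrable B μ := by
      refine Integrable.mono' ((ihInt'.const_mul (p-1)).add (hmom_int i))
        hBmeas.aestronglyMeasurable (ae_of_all _ fun ω => ?_)
      rw [Real.norm_eq_abs]
      exact hBbound ω
    have hBzero : ∫ ω, B ω ∂μ = 0 := by
      set F : Fin d → Ω → ℝ := fun j ω => ‖S ω‖ ^ (p - 2) * S ω j with hF
      set G : Fin d → Ω → ℝ := fun j ω => Y i ω j with hG
      have hBeq : ∀ ω, B ω = p * ∑ j, F j ω * G j ω := by
        intro ω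
        simp only [hB, hF, hG]
        congr 1
        rw [show (inner ℝ (S ω) (Y i ω) : ℝ) = ∑ j, S ω j * Y i ω j by
          rw [PiLp.inner_apply]; simp [RCLike.inner_apply]; exact Finset.sum_congr rfl fun j _ => mul_comm _ _]
        rw [Finset.mul_sum]
        exact Finset.sum_congr rfl fun j _ => by ring
      have hFmeas : ∀ j, Measurable (F j) := fun j =>
        (measurable_rpow_const_of_nonneg hSnorm (fun ω => norm_nonneg _) (p-2)).mul
          ((measurable_pi_apply j).comp ((WithLp.measurable_ofLp 2 _).comp hSmeas))
      have hGmeas : ∀ j, Measurable (G j) := fun j => (measurable_pi_apply j).comp ((WithLp.measurable_ofLp 2 _).comp hZmeas)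
      have hFint : ∀ j, Integrable (F j) μ := by
        intro j
        refine Integrable.mono' ((integrable_const (1:ℝ)).add ihInt')
          (hFmeas j).aestronglyMeasurable (ae_of_all _ fun ω => ?_)
        rw [Real.norm_eq_abs]
        rcases eq_or_lt_of_le (norm_nonneg (S ω)) with h0 | h0
        · have hz : S ω = 0 := by rw [← norm_eq_zero]; exact h0.symm
          have hzero : F j ω = 0 := by simp [hF, hz]
          rw [hzero, abs_zero]
          show (0:ℝ) ≤ 1 + ‖S ω‖ ^ p
          positivity
        · have hstep : ‖S ω‖ ^ (p - 2) * ‖S ω‖ = ‖S ω‖ ^ (p - 1) := by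
            nth_rewrite 2 [← Real.rpow_one (‖S ω‖)]
            rw [← Real.rpow_add h0]
            congr 1; ring
          calc |F j ω| = ‖S ω‖ ^ (p - 2) * |S ω j| := by
                simp only [hF]
                rw [abs_mul, abs_of_nonneg (Real.rpow_nonneg (norm_nonneg _) _)]
            _ ≤ ‖S ω‖ ^ (p - 2) * ‖S ω‖ :=
                mul_le_mul_of_nonneg_left (coord_abs_le_norm' _ j)
                  (Real.rpow_nonneg (norm_nonneg _) _)
            _ = ‖S ω‖ ^ (p - 1) := hstep
            _ ≤ 1 + ‖S ω‖ ^ p := rpow_sub_one_le' hp1.le (norm_nonneg _)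
      have hGint : ∀ j, Integrable (G j) μ := fun j =>
        (EuclideanSpace.proj j : EuclideanSpace ℝ (Fin d) →L[ℝ] ℝ).integrable_comp (hint i)
      have hGzero : ∀ j, ∫ ω, G j ω ∂μ = 0 := by
        intro j
        have h := (EuclideanSpace.proj j :
          EuclideanSpace ℝ (Fin d) →L[ℝ] ℝ).integral_comp_comm (hint i)
        rw [hmean i] at h
        simpa using h
      have hindepFG : ∀ j, IndepFun (F j) (G j) μ := by
        intro j
        have hφ : Measurable fun u : EuclideanSpace ℝ (Fin d) => ‖u‖ ^ (p - 2) * u j :=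
          (measurable_rpow_const_of_nonneg measurable_norm (fun u => norm_nonneg _) (p-2)).mul
            ((measurable_pi_apply j).comp (WithLp.measurable_ofLp 2 _))
        have hψ : Measurable fun u : EuclideanSpace ℝ (Fin d) => u j := (measurable_pi_apply j).comp (WithLp.measurable_ofLp 2 _)
        exact hindepSZ.comp hφ hψ
      have hprodint : ∀ (j : Fin d), Integrable (fun ω => F j ω * G j ω) μ := fun j =>
        (hindepFG j).integrable_mul (hFint j) (hGint j)
      have hprod : ∀ j, ∫ ω, F j ω * G j ω ∂μ = 0 := by
        intro j
        have h : ∫ ω, F j ω * G j ω ∂μ = (∫ ω, F j ω ∂μ) * ∫ ω, G j ω ∂μ :=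
          (hindepFG j).integral_mul_eq_mul_integral (hFint j).aestronglyMeasurable (hGint j).aestronglyMeasurable
        rw [h, hGzero j, mul_zero]
      calc ∫ ω, B ω ∂μ = ∫ ω, p * ∑ j, F j ω * G j ω ∂μ :=
            integral_congr_ae (ae_of_all _ hBeq)
        _ = p * ∫ ω, ∑ j, F j ω * G j ω ∂μ := integral_const_mul _ _
        _ = p * ∑ j, ∫ ω, F j ω * G j ω ∂μ := by
            rw [integral_finset_sum _ (fun j _ => hprodint j)]
        _ = 0 := by simp [hprod]
    have hptw : ∀ ω, ‖Y i ω + S ω‖ ^ p ≤ ‖S ω‖ ^ p + B ω + 2 * ‖Y i ω‖ ^ p := by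
      intro ω
      rw [add_comm (Y i ω) (S ω)]
      exact norm_add_rpow_le' hp1 hp2 (S ω) (Y i ω)
    constructor
    · refine hfint.congr (ae_of_all _ fun ω => ?_)
      show ‖Y i ω + S ω‖ ^ p = ‖∑ j ∈ Finset.cons i s hi, Y j ω‖ ^ p
      rw [hsum_eq ω]
    · have h1 : Integrable (fun ω => ‖S ω‖ ^ p + B ω) μ := ihInt'.add hBint
      have h2 : Integrable (fun ω => 2 * ‖Y i ω‖ ^ p) μ := (hmom_int i).const_mul 2
      have hg : Integrable (fun ω => ‖S ω‖ ^ p + B ω + 2 * ‖Y i ω‖ ^ p) μ := h1.add h2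
      have hle : ∫ ω, ‖Y i ω + S ω‖ ^ p ∂μ
          ≤ ∫ ω, (‖S ω‖ ^ p + B ω + 2 * ‖Y i ω‖ ^ p) ∂μ :=
        integral_mono hfint hg hptw
      have hsplit : ∫ ω, (‖S ω‖ ^ p + B ω + 2 * ‖Y i ω‖ ^ p) ∂μ
          = ∫ ω, ‖S ω‖ ^ p ∂μ + ∫ ω, B ω ∂μ + 2 * ∫ ω, ‖Y i ω‖ ^ p ∂μ := by
        rw [integral_add h1 h2, integral_add ihInt' hBint, integral_const_mul, integral_const_mul]
      have hfinal : ∫ ω, ‖∑ j ∈ Finset.cons i s hi, Y j ω‖ ^ p ∂μ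
          = ∫ ω, ‖Y i ω + S ω‖ ^ p ∂μ := by
        refine integral_congr_ae (ae_of_all _ fun ω => ?_)
        show ‖∑ j ∈ Finset.cons i s hi, Y j ω‖ ^ p = ‖Y i ω + S ω‖ ^ p
        rw [hsum_eq ω]
      rw [hfinal, Finset.sum_cons]
      calc ∫ ω, ‖Y i ω + S ω‖ ^ p ∂μ
          ≤ ∫ ω, ‖S ω‖ ^ p ∂μ + ∫ ω, B ω ∂μ + 2 * ∫ ω, ‖Y i ω‖ ^ p ∂μ := by
            rw [← hsplit]; exact hle
        _ = ∫ ω, ‖S ω‖ ^ p ∂μ + 2 * ∫ ω, ‖Y i ω‖ ^ p ∂μ := by rw [hBzero]; ring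
        _ ≤ 2 * ∑ j ∈ s, ∫ ω, ‖Y j ω‖ ^ p ∂μ + 2 * ∫ ω, ‖Y i ω‖ ^ p ∂μ := by linarith
        _ = 2 * (∫ ω, ‖Y i ω‖ ^ p ∂μ + ∑ j ∈ s, ∫ ω, ‖Y j ω‖ ^ p ∂μ) := by ring

end Auxiliary

/-- Lemma on minibatch estimators: if `X 0, …, X (M-1)` are i.i.d. unbiased
stochastic gradients with mean `v` and `p`-th central moment at most `σ^p` for `p ∈ (1, 2]`,
then the minibatch average `g = (1/M) ∑ i, X i` satisfies
`E[‖g - v‖] ≤ 2 σ / M^((p-1)/p)`. -/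
theorem minibatch_deviation_le
    {Ω : Type*} [MeasurableSpace Ω] (μ : Measure Ω) [IsProbabilityMeasure μ]
    {d : ℕ} (p σ : ℝ) (hp1 : 1 < p) (hp2 : p ≤ 2) (hσ : 0 ≤ σ)
    (M : ℕ) (hM : 0 < M)
    (X : Fin M → Ω → EuclideanSpace ℝ (Fin d)) (v : EuclideanSpace ℝ (Fin d))
    (hmeas : ∀ i, Measurable (X i))
    (hindep : iIndepFun X μ)
    (hident : ∀ i j, IdentDistrib (X i) (X j) μ μ)
    (hint : ∀ i, Integrable (X i) μ)
    (hmean : ∀ i, ∫ ω, X i ω ∂μ = v)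
    (hmom_int : ∀ i, Integrable (fun ω => ‖X i ω - v‖ ^ p) μ)
    (hmom : ∀ i, ∫ ω, ‖X i ω - v‖ ^ p ∂μ ≤ σ ^ p) :
    ∫ ω, ‖(M : ℝ)⁻¹ • ∑ i, X i ω - v‖ ∂μ ≤ 2 * σ / (M : ℝ) ^ ((p - 1) / p) := by
  have hp0 : (0:ℝ) < p := by linarith
  have hM0 : (0:ℝ) < (M:ℝ) := by exact_mod_cast hM
  set Y : Fin M → Ω → EuclideanSpace ℝ (Fin d) := fun i ω => X i ω - v with hY
  have hYmeas : ∀ i, Measurable (Y i) := fun i => (hmeas i).sub measurable_const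
  have hYindep : iIndepFun Y μ :=
    hindep.comp (fun _ u => u - v) (fun _ => measurable_id.sub measurable_const)
  have hYint : ∀ i, Integrable (Y i) μ := fun i => (hint i).sub (integrable_const v)
  have hYmean : ∀ i, ∫ ω, Y i ω ∂μ = 0 := by
    intro i
    rw [hY]
    rw [integral_sub (hint i) (integrable_const v), hmean i, integral_const]
    simp
  have hYmom_int : ∀ i, Integrable (fun ω => ‖Y i ω‖ ^ p) μ := fun i => hmom_int i
  obtain ⟨hInt, hLe⟩ := sum_rpow_bound μ hp1 hp2 Y hYmeas hYindep hYint hYmean hYmom_int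
    Finset.univ
  set SY : Ω → EuclideanSpace ℝ (Fin d) := fun ω => ∑ i, Y i ω with hSY
  -- rewrite the estimator deviation
  have hrw : ∀ ω, (M : ℝ)⁻¹ • ∑ i, X i ω - v = (M : ℝ)⁻¹ • SY ω := by
    intro ω
    show (M : ℝ)⁻¹ • ∑ i, X i ω - v = (M : ℝ)⁻¹ • ∑ i : Fin M, (X i ω - v)
    have h1 : ∑ i : Fin M, (X i ω - v) = ∑ i, X i ω - M • v := by
      rw [Finset.sum_sub_distrib, Finset.sum_const, Finset.card_univ, Fintype.card_fin]
    rw [h1, smul_sub, ← Nat.cast_smul_eq_nsmul ℝ M v, smul_smul,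
      inv_mul_cancel₀ hM0.ne', one_smul]
  have hnorm : ∀ ω, ‖(M : ℝ)⁻¹ • ∑ i, X i ω - v‖ = (M:ℝ)⁻¹ * ‖SY ω‖ := by
    intro ω
    rw [hrw ω, norm_smul, Real.norm_eq_abs, abs_of_nonneg (by positivity)]
  -- Hölder : L1 ≤ Lp for probability measures
  have hSYaesm : AEStronglyMeasurable SY μ :=
    (Finset.measurable_sum _ (fun i _ => hYmeas i)).aestronglyMeasurable
  have h0 : ENNReal.ofReal p ≠ 0 := by
    simp only [ne_eq, ENNReal.ofReal_eq_zero, not_le]; exact hp0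
  have htop : ENNReal.ofReal p ≠ ⊤ := ENNReal.ofReal_ne_top
  have hmem : MemLp SY (ENNReal.ofReal p) μ := by
    refine (memLp_norm_rpow_iff hSYaesm h0 htop).1 ?_
    rw [ENNReal.toReal_ofReal hp0.le, ENNReal.div_self h0 htop, memLp_one_iff_integrable]
    exact hInt
  have hpq : p.HolderConjugate (Real.conjExponent p) := Real.HolderConjugate.conjExponent hp1
  have hHolder : ∫ ω, ‖SY ω‖ ∂μ ≤ (∫ ω, ‖SY ω‖ ^ p ∂μ) ^ (1/p) := by
    have h := integral_mul_le_Lp_mul_Lq_of_nonneg hpq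
      (f := fun ω => ‖SY ω‖) (g := fun _ => (1:ℝ))
      (ae_of_all _ fun ω => norm_nonneg _) (ae_of_all _ fun _ => zero_le_one)
      hmem.norm (memLp_const 1)
    simpa [Real.one_rpow] using h
  -- moment bound
  have hsum : ∑ i : Fin M, ∫ ω, ‖Y i ω‖ ^ p ∂μ ≤ (M:ℝ) * σ ^ p := by
    calc ∑ i : Fin M, ∫ ω, ‖Y i ω‖ ^ p ∂μ ≤ ∑ _i : Fin M, σ ^ p :=
          Finset.sum_le_sum (fun i _ => hmom i)
      _ = (M:ℝ) * σ ^ p := by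
          rw [Finset.sum_const, Finset.card_univ, Fintype.card_fin, nsmul_eq_mul]
  have hLe2 : ∫ ω, ‖SY ω‖ ^ p ∂μ ≤ 2 * ((M:ℝ) * σ ^ p) := by
    calc ∫ ω, ‖SY ω‖ ^ p ∂μ ≤ 2 * ∑ i : Fin M, ∫ ω, ‖Y i ω‖ ^ p ∂μ := hLe
      _ ≤ 2 * ((M:ℝ) * σ ^ p) := by linarith
  have hmono : (∫ ω, ‖SY ω‖ ^ p ∂μ) ^ (1/p) ≤ (2 * ((M:ℝ) * σ ^ p)) ^ (1/p) :=
    Real.rpow_le_rpow (integral_nonneg fun ω => Real.rpow_nonneg (norm_nonneg _) p)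
      hLe2 (by positivity)
  have hsp : (σ ^ p) ^ (1/p) = σ := by
    rw [← Real.rpow_mul hσ, mul_one_div, div_self hp0.ne', Real.rpow_one]
  have hfact : ((2:ℝ) * ((M:ℝ) * σ ^ p)) ^ (1/p) = 2 ^ (1/p) * ((M:ℝ) ^ (1/p) * σ) := by
    rw [Real.mul_rpow (by norm_num) (by positivity), Real.mul_rpow hM0.le (by positivity), hsp]
  have hsplitM : (M:ℝ) ^ (1/p) * (M:ℝ) ^ ((p-1)/p) = (M:ℝ) := by
    rw [← Real.rpow_add hM0]
    have he : 1/p + (p-1)/p = 1 := by field_simp; ring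
    rw [he, Real.rpow_one]
  have hQ : (0:ℝ) < (M:ℝ) ^ ((p-1)/p) := Real.rpow_pos_of_pos hM0 _
  have h2p : (2:ℝ) ^ (1/p) ≤ 2 := by
    calc (2:ℝ) ^ (1/p) ≤ (2:ℝ) ^ (1:ℝ) :=
          Real.rpow_le_rpow_of_exponent_le one_le_two
            (by rw [div_le_one hp0]; linarith)
      _ = 2 := Real.rpow_one 2
  have hnumeric : (M:ℝ)⁻¹ * (2 ^ (1/p) * ((M:ℝ) ^ (1/p) * σ)) ≤ 2 * σ / (M:ℝ) ^ ((p-1)/p) := by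
    rw [le_div_iff₀ hQ]
    have hL : (M:ℝ)⁻¹ * (2 ^ (1/p) * ((M:ℝ) ^ (1/p) * σ)) * (M:ℝ) ^ ((p-1)/p)
        = 2 ^ (1/p) * σ := by
      calc (M:ℝ)⁻¹ * (2 ^ (1/p) * ((M:ℝ) ^ (1/p) * σ)) * (M:ℝ) ^ ((p-1)/p)
          = 2 ^ (1/p) * σ * ((M:ℝ)⁻¹ * ((M:ℝ) ^ (1/p) * (M:ℝ) ^ ((p-1)/p))) := by ring
        _ = 2 ^ (1/p) * σ := by rw [hsplitM, inv_mul_cancel₀ hM0.ne', mul_one]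
    rw [hL]
    exact mul_le_mul_of_nonneg_right h2p hσ
  -- chain everything
  calc ∫ ω, ‖(M : ℝ)⁻¹ • ∑ i, X i ω - v‖ ∂μ
      = ∫ ω, (M:ℝ)⁻¹ * ‖SY ω‖ ∂μ := integral_congr_ae (ae_of_all _ hnorm)
    _ = (M:ℝ)⁻¹ * ∫ ω, ‖SY ω‖ ∂μ := integral_const_mul _ _
    _ ≤ (M:ℝ)⁻¹ * (∫ ω, ‖SY ω‖ ^ p ∂μ) ^ (1/p) :=
        mul_le_mul_of_nonneg_left hHolder (by positivity)
    _ ≤ (M:ℝ)⁻¹ * (2 * ((M:ℝ) * σ ^ p)) ^ (1/p) :=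
        mul_le_mul_of_nonneg_left hmono (by positivity)
    _ = (M:ℝ)⁻¹ * (2 ^ (1/p) * ((M:ℝ) ^ (1/p) * σ)) := by rw [hfact]
    _ ≤ 2 * σ / (M : ℝ) ^ ((p - 1) / p) := hnumeric
end

section
/- Let X be a random vector in ℝ^d, τ > 0, p ∈ (1, 2], and suppose E[X] = x ∈ ℝ^d, E[‖X − x‖^p] ≤ σ^p, and ‖x‖ ≤ τ/2. Then the clipped random vector X̃ := clip(X, τ) satisfies ‖E[X̃] − x‖ ≤ 2^p σ^p / τ^{p−1}. -/
open MeasureTheory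

/-- The clipping operator: `clip x τ = min {1, τ/‖x‖} • x` for `x ≠ 0`, and `clip 0 τ = 0`
(note that for `x = 0` this formula indeed yields `0`, since `c • 0 = 0`). -/
noncomputable def clip {E : Type*} [NormedAddCommGroup E] [NormedSpace ℝ E]
    (x : E) (τ : ℝ) : E :=
  (min 1 (τ / ‖x‖)) • x

/-- bias of the clipped estimator, part of Lemma 5.1 of Sadiev et al.:
if `X` is a random vector in `ℝ^d` with mean `x`, `p`-th central moment at most `σ^p`
(`p ∈ (1,2]`), and `‖x‖ ≤ τ/2` for `τ > 0`, then `‖E[clip(X, τ)] - x‖ ≤ 2^p σ^p / τ^(p-1)`. -/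
theorem clip_bias_le
    {Ω : Type*} [MeasurableSpace Ω] (μ : Measure Ω) [IsProbabilityMeasure μ]
    {d : ℕ} (p σ τ : ℝ) (hp1 : 1 < p) (hp2 : p ≤ 2) (hσ : 0 ≤ σ) (hτ : 0 < τ)
    (X : Ω → EuclideanSpace ℝ (Fin d)) (x : EuclideanSpace ℝ (Fin d))
    (hmeas : Measurable X)
    (hint : Integrable X μ)
    (hmean : ∫ ω, X ω ∂μ = x)
    (hmom_int : Integrable (fun ω => ‖X ω - x‖ ^ p) μ)
    (hmom : ∫ ω, ‖X ω - x‖ ^ p ∂μ ≤ σ ^ p)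
    (hx : ‖x‖ ≤ τ / 2) :
    ‖(∫ ω, clip (X ω) τ ∂μ) - x‖ ≤ 2 ^ p * σ ^ p / τ ^ (p - 1) := by
  have hp0 : (0:ℝ) ≤ p - 1 := by linarith
  set C : ℝ := (2 / τ) ^ (p - 1) with hC
  have hCpos : 0 < C := Real.rpow_pos_of_pos (by positivity) _
  -- pointwise bound
  have key : ∀ ω, ‖clip (X ω) τ - X ω‖ ≤ C * ‖X ω - x‖ ^ p := by
    intro ω
    set y := X ω
    have hrhs : 0 ≤ C * ‖y - x‖ ^ p := by positivity
    have hdiff : clip y τ - y = (min 1 (τ / ‖y‖) - 1) • y := by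
      simp [clip, sub_smul]
    by_cases h : ‖y‖ ≤ τ
    · rcases eq_or_ne y 0 with hy | hy
      · simpa [clip, hy] using hrhs
      · have : (1:ℝ) ≤ τ / ‖y‖ := (one_le_div (norm_pos_iff.2 hy)).2 h
        have : min 1 (τ / ‖y‖) = 1 := min_eq_left this
        simp [hdiff, this]
        exact hrhs
    · push_neg at h
      have hy0 : 0 < ‖y‖ := lt_trans hτ h
      have hmin : min 1 (τ / ‖y‖) = τ / ‖y‖ :=
        min_eq_right ((div_le_one hy0).2 h.le)
      have hnorm : ‖clip y τ - y‖ = ‖y‖ - τ := by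
        rw [hdiff, norm_smul, hmin, Real.norm_eq_abs, abs_of_nonpos (by
          have : τ / ‖y‖ ≤ 1 := (div_le_one hy0).2 h.le
          linarith)]
        field_simp
        ring
      have h1 : τ / 2 ≤ ‖y - x‖ := by
        have := norm_sub_norm_le y x
        have := abs_le.1 (abs_norm_sub_norm_le y x) -- just to keep names
        have hle : ‖y‖ - ‖x‖ ≤ ‖y - x‖ := norm_sub_norm_le y x
        linarith
      have h2 : ‖y‖ - τ ≤ ‖y - x‖ := by
        have hle : ‖y‖ - ‖x‖ ≤ ‖y - x‖ := norm_sub_norm_le y x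
        linarith
      have hpos : 0 < ‖y - x‖ := lt_of_lt_of_le (by linarith) h1
      have hone : (1:ℝ) ≤ (2 / τ) * ‖y - x‖ := by
        rw [div_mul_eq_mul_div, le_div_iff₀ hτ]
        linarith
      have hfac : (1:ℝ) ≤ C * ‖y - x‖ ^ (p - 1) := by
        calc (1:ℝ) = 1 ^ (p - 1) := by rw [Real.one_rpow]
          _ ≤ ((2 / τ) * ‖y - x‖) ^ (p - 1) :=
            Real.rpow_le_rpow zero_le_one hone hp0
          _ = C * ‖y - x‖ ^ (p - 1) := Real.mul_rpow (by positivity) hpos.le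
      have hsplit : ‖y - x‖ ^ p = ‖y - x‖ ^ (p - 1) * ‖y - x‖ := by
        nth_rewrite 3 [← Real.rpow_one ‖y - x‖]
        rw [← Real.rpow_add hpos, sub_add_cancel]
      calc ‖clip y τ - y‖ = ‖y‖ - τ := hnorm
        _ ≤ ‖y - x‖ := h2
        _ = 1 * ‖y - x‖ := (one_mul _).symm
        _ ≤ (C * ‖y - x‖ ^ (p - 1)) * ‖y - x‖ :=
            mul_le_mul_of_nonneg_right hfac hpos.le
        _ = C * ‖y - x‖ ^ p := by rw [mul_assoc, ← hsplit]
  -- integrability of clip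
  have hmeasc : Measurable fun ω => clip (X ω) τ := by
    unfold clip
    exact (measurable_const.min (measurable_const.div hmeas.norm)).smul hmeas
  have hclip_bdd : ∀ ω, ‖clip (X ω) τ‖ ≤ τ := by
    intro ω
    rcases eq_or_ne (X ω) 0 with hy | hy
    · simp [clip, hy]; exact hτ.le
    · have hy0 : 0 < ‖X ω‖ := norm_pos_iff.2 hy
      rw [clip, norm_smul, Real.norm_eq_abs, abs_of_nonneg (le_min zero_le_one (by positivity))]
      rcases min_cases 1 (τ / ‖X ω‖) with ⟨h, hle⟩ | ⟨h, hle⟩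
      · rw [h, one_mul]
        have := (one_le_div hy0).1 hle
        linarith
      · rw [h]
        field_simp
        exact le_rfl
  have hclip_int : Integrable (fun ω => clip (X ω) τ) μ :=
    Integrable.mono' (integrable_const τ) hmeasc.aestronglyMeasurable
      (Filter.Eventually.of_forall hclip_bdd)
  have hsubint : Integrable (fun ω => clip (X ω) τ - X ω) μ := hclip_int.sub hint
  have hintsub : (∫ ω, clip (X ω) τ ∂μ) - x = ∫ ω, (clip (X ω) τ - X ω) ∂μ := by
    rw [integral_sub hclip_int hint, hmean]
  have hCint : Integrable (fun ω => C * ‖X ω - x‖ ^ p) μ := hmom_int.const_mul C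
  calc ‖(∫ ω, clip (X ω) τ ∂μ) - x‖ = ‖∫ ω, (clip (X ω) τ - X ω) ∂μ‖ := by rw [hintsub]
    _ ≤ ∫ ω, ‖clip (X ω) τ - X ω‖ ∂μ := norm_integral_le_integral_norm _
    _ ≤ ∫ ω, C * ‖X ω - x‖ ^ p ∂μ :=
        integral_mono hsubint.norm hCint key
    _ = C * ∫ ω, ‖X ω - x‖ ^ p ∂μ := integral_const_mul C _
    _ ≤ C * σ ^ p := by
        apply mul_le_mul_of_nonneg_left hmom hCpos.le
    _ ≤ 2 ^ p * σ ^ p / τ ^ (p - 1) := by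
        rw [hC, Real.div_rpow (by norm_num) hτ.le, div_mul_eq_mul_div]
        have h2p : (2:ℝ) ^ (p - 1) ≤ 2 ^ p :=
          Real.rpow_le_rpow_of_exponent_le (by norm_num) (by linarith)
        exact (div_le_div_iff_of_pos_right (Real.rpow_pos_of_pos hτ _)).2
          (mul_le_mul_of_nonneg_right h2p (Real.rpow_nonneg hσ _))
end

section
/- Let X be a random vector in ℝ^d, τ > 0, p ∈ (1, 2], and suppose E[X] = x ∈ ℝ^d, E[‖X − x‖^p] ≤ σ^p, and ‖x‖ ≤ τ/2. Then the clipped random vector X̃ := clip(X, τ) satisfies both E[‖X̃ − x‖²] ≤ 18 τ^{2−p} σ^p and E[‖X̃ − E[X̃]‖²] ≤ 18 τ^{2−p} σ^p. -/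
open MeasureTheory

lemma norm_clip_le {E : Type*} [NormedAddCommGroup E] [NormedSpace ℝ E]
    (y : E) {τ : ℝ} (hτ : 0 < τ) : ‖clip y τ‖ ≤ τ := by
  rcases eq_or_ne y 0 with h | h
  · simp [clip, h, hτ.le]
  · have hy : 0 < ‖y‖ := norm_pos_iff.2 h
    have hmin0 : 0 ≤ min 1 (τ / ‖y‖) := le_min one_pos.le (div_nonneg hτ.le hy.le)
    have : ‖clip y τ‖ = min 1 (τ / ‖y‖) * ‖y‖ := by
      rw [clip, norm_smul, Real.norm_eq_abs, abs_of_nonneg hmin0]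
    rw [this]
    calc min 1 (τ / ‖y‖) * ‖y‖ ≤ (τ / ‖y‖) * ‖y‖ :=
          mul_le_mul_of_nonneg_right (min_le_right _ _) hy.le
      _ = τ := div_mul_cancel₀ τ hy.ne'

lemma clip_eq_self {E : Type*} [NormedAddCommGroup E] [NormedSpace ℝ E]
    {y : E} {τ : ℝ} (h : ‖y‖ ≤ τ) : clip y τ = y := by
  rcases eq_or_ne y 0 with h0 | h0
  · simp [clip, h0]
  · have hy : 0 < ‖y‖ := norm_pos_iff.2 h0
    have : (1 : ℝ) ≤ τ / ‖y‖ := (one_le_div hy).2 h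
    rw [clip, min_eq_left this, one_smul]

lemma clip_pointwise {E : Type*} [NormedAddCommGroup E] [NormedSpace ℝ E]
    {p τ : ℝ} (hp1 : 1 < p) (hp2 : p ≤ 2) (hτ : 0 < τ)
    (x y : E) (hx : ‖x‖ ≤ τ / 2) :
    ‖clip y τ - x‖ ^ 2 ≤ 9 * τ ^ (2 - p) * ‖y - x‖ ^ p := by
  have h2p : (0:ℝ) ≤ 2 - p := by linarith
  have hτp : 0 < τ ^ (2 - p) := Real.rpow_pos_of_pos hτ _
  have hnp : 0 ≤ ‖y - x‖ ^ p := Real.rpow_nonneg (norm_nonneg _) p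
  by_cases hc : ‖y - x‖ ≤ τ / 2
  · have hyn : ‖y‖ ≤ τ := by
      calc ‖y‖ = ‖y - x + x‖ := by rw [sub_add_cancel]
        _ ≤ ‖y - x‖ + ‖x‖ := norm_add_le _ _
        _ ≤ τ := by linarith
    rw [clip_eq_self hyn]
    have heq : ‖y - x‖ ^ 2 = ‖y - x‖ ^ (2 - p) * ‖y - x‖ ^ p := by
      rw [← Real.rpow_add' (norm_nonneg _) (by norm_num)]
      norm_num [Real.rpow_natCast]
    rw [heq]
    have h1 : ‖y - x‖ ^ (2 - p) ≤ τ ^ (2 - p) :=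
      Real.rpow_le_rpow (norm_nonneg _) (by linarith) h2p
    nlinarith [mul_le_mul_of_nonneg_right h1 hnp, mul_nonneg hτp.le hnp]
  · push_neg at hc
    have h1 : ‖clip y τ - x‖ ≤ 3 / 2 * τ := by
      calc ‖clip y τ - x‖ ≤ ‖clip y τ‖ + ‖x‖ := norm_sub_le _ _
        _ ≤ 3 / 2 * τ := by linarith [norm_clip_le y hτ]
    have hsq : ‖clip y τ - x‖ ^ 2 ≤ (3 / 2 * τ) ^ 2 :=
      pow_le_pow_left₀ (norm_nonneg _) h1 2
    have hτ2 : τ ^ (2 - p) * τ ^ p = τ ^ 2 := by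
      rw [← Real.rpow_add hτ]
      norm_num [Real.rpow_natCast]
    have hτple : τ ^ p ≤ 4 * ‖y - x‖ ^ p := by
      calc τ ^ p ≤ (2 * ‖y - x‖) ^ p :=
            Real.rpow_le_rpow hτ.le (by linarith) (by linarith)
        _ = 2 ^ p * ‖y - x‖ ^ p := Real.mul_rpow (by norm_num) (norm_nonneg _)
        _ ≤ 4 * ‖y - x‖ ^ p := by
            have : (2:ℝ) ^ p ≤ 2 ^ (2:ℝ) :=
              Real.rpow_le_rpow_of_exponent_le one_le_two hp2
            have h4 : (2:ℝ) ^ (2:ℝ) = 4 := by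
              rw [show (2:ℝ) = ((2:ℕ):ℝ) by norm_num, Real.rpow_natCast]; norm_num
            nlinarith
    nlinarith [mul_le_mul_of_nonneg_left hτple hτp.le]

lemma var_min {Ω : Type*} [MeasurableSpace Ω] {μ : Measure Ω} [IsProbabilityMeasure μ]
    {d : ℕ} (Y : Ω → EuclideanSpace ℝ (Fin d)) (x : EuclideanSpace ℝ (Fin d))
    (hY : Integrable Y μ) (hY2 : Integrable (fun ω => ‖Y ω - x‖ ^ 2) μ) :
    ∫ ω, ‖Y ω - (∫ ω', Y ω' ∂μ)‖ ^ 2 ∂μ ≤ ∫ ω, ‖Y ω - x‖ ^ 2 ∂μ := by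
  set m := ∫ ω', Y ω' ∂μ with hm
  have hYx : Integrable (fun ω => Y ω - x) μ := hY.sub (integrable_const x)
  have hmx : ∫ ω, (Y ω - x) ∂μ = m - x := by
    rw [integral_sub hY (integrable_const x), integral_const]
    simp [hm]
  have hinner : Integrable (fun ω => (inner ℝ (m - x) (Y ω - x) : ℝ)) μ :=
    hYx.const_inner (m - x)
  have heq : ∀ ω, ‖Y ω - m‖ ^ 2
      = ‖Y ω - x‖ ^ 2 - 2 * (inner ℝ (m - x) (Y ω - x) : ℝ) + ‖m - x‖ ^ 2 := by
    intro ω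
    have : Y ω - m = (Y ω - x) - (m - x) := by abel
    rw [this, norm_sub_sq_real, real_inner_comm]
  calc ∫ ω, ‖Y ω - m‖ ^ 2 ∂μ
      = ∫ ω, (‖Y ω - x‖ ^ 2 - 2 * (inner ℝ (m - x) (Y ω - x) : ℝ) + ‖m - x‖ ^ 2) ∂μ :=
        integral_congr_ae (Filter.Eventually.of_forall heq)
    _ = ∫ ω, ‖Y ω - x‖ ^ 2 ∂μ - 2 * (inner ℝ (m - x) (∫ ω, (Y ω - x) ∂μ) : ℝ) + ‖m - x‖ ^ 2 := by
        have hsub : Integrable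
            (fun ω => ‖Y ω - x‖ ^ 2 - 2 * (inner ℝ (m - x) (Y ω - x) : ℝ)) μ :=
          hY2.sub (hinner.const_mul 2)
        rw [integral_add hsub (integrable_const _),
          integral_sub hY2 (hinner.const_mul 2), integral_const, integral_const_mul,
          integral_inner hYx]
        simp
    _ = ∫ ω, ‖Y ω - x‖ ^ 2 ∂μ - ‖m - x‖ ^ 2 := by
        rw [hmx, real_inner_self_eq_norm_sq]; ring
    _ ≤ ∫ ω, ‖Y ω - x‖ ^ 2 ∂μ := by nlinarith [sq_nonneg ‖m - x‖]

/-- second-moment bounds for the clipped estimator, part of Lemma 5.1 of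
Sadiev et al.: if `X` is a random vector in `ℝ^d` with mean `x`, `p`-th central moment at
most `σ^p` (`p ∈ (1,2]`), and `‖x‖ ≤ τ/2` for `τ > 0`, then
`E[‖clip(X,τ) - x‖²] ≤ 18 τ^(2-p) σ^p` and `E[‖clip(X,τ) - E[clip(X,τ)]‖²] ≤ 18 τ^(2-p) σ^p`. -/
theorem clip_second_moment_le
    {Ω : Type*} [MeasurableSpace Ω] (μ : Measure Ω) [IsProbabilityMeasure μ]
    {d : ℕ} (p σ τ : ℝ) (hp1 : 1 < p) (hp2 : p ≤ 2) (hσ : 0 ≤ σ) (hτ : 0 < τ)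
    (X : Ω → EuclideanSpace ℝ (Fin d)) (x : EuclideanSpace ℝ (Fin d))
    (hmeas : Measurable X)
    (hint : Integrable X μ)
    (hmean : ∫ ω, X ω ∂μ = x)
    (hmom_int : Integrable (fun ω => ‖X ω - x‖ ^ p) μ)
    (hmom : ∫ ω, ‖X ω - x‖ ^ p ∂μ ≤ σ ^ p)
    (hx : ‖x‖ ≤ τ / 2) :
    (∫ ω, ‖clip (X ω) τ - x‖ ^ 2 ∂μ ≤ 18 * τ ^ (2 - p) * σ ^ p) ∧
    (∫ ω, ‖clip (X ω) τ - ∫ ω', clip (X ω') τ ∂μ‖ ^ 2 ∂μ ≤ 18 * τ ^ (2 - p) * σ ^ p) := by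
  set Y : Ω → EuclideanSpace ℝ (Fin d) := fun ω => clip (X ω) τ with hY
  have hYm : Measurable Y := by
    apply Measurable.fun_smul
    · exact (measurable_const.min (measurable_const.div hmeas.norm))
    · exact hmeas
  have hYb : ∀ ω, ‖Y ω‖ ≤ τ := fun ω => norm_clip_le (X ω) hτ
  have hYint : Integrable Y μ :=
    (integrable_const τ).mono' hYm.aestronglyMeasurable
      (Filter.Eventually.of_forall fun ω => hYb ω)
  have hY2int : Integrable (fun ω => ‖Y ω - x‖ ^ 2) μ := by
    refine (integrable_const ((3 / 2 * τ) ^ 2)).mono'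
      ((hYm.sub measurable_const).norm.pow measurable_const).aestronglyMeasurable
      (Filter.Eventually.of_forall fun ω => ?_)
    rw [Real.norm_eq_abs, abs_of_nonneg (by positivity)]
    refine pow_le_pow_left₀ (norm_nonneg _) ?_ 2
    calc ‖Y ω - x‖ ≤ ‖Y ω‖ + ‖x‖ := norm_sub_le _ _
      _ ≤ 3 / 2 * τ := by linarith [hYb ω]
  have hτp : 0 < τ ^ (2 - p) := Real.rpow_pos_of_pos hτ _
  have hσp : (0:ℝ) ≤ σ ^ p := Real.rpow_nonneg hσ p
  have key1 : ∫ ω, ‖Y ω - x‖ ^ 2 ∂μ ≤ 9 * τ ^ (2 - p) * σ ^ p := by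
    calc ∫ ω, ‖Y ω - x‖ ^ 2 ∂μ
        ≤ ∫ ω, 9 * τ ^ (2 - p) * ‖X ω - x‖ ^ p ∂μ :=
          integral_mono hY2int (hmom_int.const_mul _)
            (fun ω => clip_pointwise hp1 hp2 hτ x (X ω) hx)
      _ = 9 * τ ^ (2 - p) * ∫ ω, ‖X ω - x‖ ^ p ∂μ := integral_const_mul _ _
      _ ≤ 9 * τ ^ (2 - p) * σ ^ p := by
          exact mul_le_mul_of_nonneg_left hmom (by positivity)
  have hfin : 9 * τ ^ (2 - p) * σ ^ p ≤ 18 * τ ^ (2 - p) * σ ^ p := by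
    nlinarith [mul_nonneg hτp.le hσp]
  constructor
  · exact key1.trans hfin
  · exact ((var_min Y x hYint hY2int).trans key1).trans hfin
end

section
/- Let f : ℝ^{d_x} × ℝ^{d_y} → ℝ be ℓ-smooth (its gradient is ℓ-Lipschitz) and such that f(x, ·) is μ-strongly concave for every x, and set κ := ℓ/μ. Then y*(x) := argmax_{y ∈ ℝ^{d_y}} f(x, y) is well-defined and κ-Lipschitz in x, the function Φ(x) := max_{y ∈ ℝ^{d_y}} f(x, y) is differentiable with ∇Φ(x) = ∇_x f(x, y*(x)), and ∇Φ is (ℓ + κℓ)-Lipschitz. -/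
open Set

noncomputable section

/-- `ℝ^n` with the Euclidean norm. -/
abbrev Euc (n : ℕ) := EuclideanSpace ℝ (Fin n)

/-- The point `(x, y)` of the Euclidean (ℓ²) product `ℝ^{d_x} × ℝ^{d_y}`. -/
def pt {dx dy : ℕ} (x : Euc dx) (y : Euc dy) : WithLp 2 (Euc dx × Euc dy) :=
  (WithLp.equiv 2 (Euc dx × Euc dy)).symm (x, y)

section Aux

variable {F : Type*} [NormedAddCommGroup F] [InnerProductSpace ℝ F] [CompleteSpace F]

lemma tangent_le {g : F → ℝ} {a Ga : F} (hc : ConcaveOn ℝ univ g)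
    (hGa : HasGradientAt g Ga a) (b : F) :
    g b ≤ g a + inner ℝ Ga (b - a) := by
  set φ : ℝ → ℝ := fun t => g (a + t • (b - a)) with hφ
  have hcφ : ConcaveOn ℝ univ φ := by
    have := hc.comp_affineMap (AffineMap.lineMap a b : ℝ →ᵃ[ℝ] F)
    simp only [preimage_univ] at this
    have e : φ = g ∘ ⇑(AffineMap.lineMap a b : ℝ →ᵃ[ℝ] F) := by
      funext t
      simp [φ, AffineMap.lineMap_apply, add_comm, smul_sub]
    rw [e]; exact this
  have h2 : HasDerivAt (fun s : ℝ => a + s • (b - a)) (b - a) 0 := by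
    simpa using ((hasDerivAt_id (0:ℝ)).smul_const (b - a)).const_add a
  have hd : HasDerivAt φ (inner ℝ Ga (b - a) : ℝ) 0 := by
    have h1 : HasFDerivAt g (InnerProductSpace.toDual ℝ F Ga) (a + (0:ℝ) • (b - a)) := by
      simpa using (hasGradientAt_iff_hasFDerivAt.mp hGa)
    have := h1.comp_hasDerivAt (0:ℝ) h2
    exact this
  have hs := hcφ.slope_le_of_hasDerivAt (mem_univ (0:ℝ)) (mem_univ (1:ℝ)) one_pos hd
  have h0 : φ 0 = g a := by simp [φ]
  have h1 : φ 1 = g b := by simp [φ]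
  rw [slope_def_field] at hs
  rw [h0, h1] at hs
  have := hs
  simp only [div_one, sub_zero] at this
  linarith [this]

lemma grad_h {g : F → ℝ} (hg : Differentiable ℝ g) (μ : ℝ) (y : F) :
    HasGradientAt (fun z => g z + μ / 2 * ‖z‖ ^ 2) (gradient g y + μ • y) y := by
  have h1 : HasFDerivAt g (InnerProductSpace.toDual ℝ F (gradient g y)) y :=
    (hg y).hasGradientAt
  have h2 : HasFDerivAt (fun z : F => ‖z‖ ^ 2) (2 • (innerSL ℝ y)) y :=
    (hasStrictFDerivAt_norm_sq y).hasFDerivAt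
  have h3 := h1.add (h2.const_mul (μ / 2))
  rw [hasGradientAt_iff_hasFDerivAt]
  have e : InnerProductSpace.toDual ℝ F (gradient g y + μ • y) =
      InnerProductSpace.toDual ℝ F (gradient g y) + (μ / 2) • 2 • (innerSL ℝ y) := by
    ext v
    simp [inner_add_left, inner_smul_left, real_inner_comm y v]
    ring
  rw [e]; exact h3

lemma strong_mono {g : F → ℝ} (hg : Differentiable ℝ g) {μ : ℝ}
    (hc : ConcaveOn ℝ univ (fun y => g y + μ / 2 * ‖y‖ ^ 2)) (a b : F) :
    inner ℝ (gradient g a - gradient g b) (a - b) ≤ -(μ * ‖a - b‖ ^ 2) := by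
  have t1 := tangent_le hc (grad_h hg μ a) b
  have t2 := tangent_le hc (grad_h hg μ b) a
  have e1 : inner ℝ (gradient g a + μ • a) (b - a)
      = (inner ℝ (gradient g a) (b - a) : ℝ) + μ * inner ℝ a (b - a) := by
    rw [inner_add_left, real_inner_smul_left]
  have e2 : inner ℝ (gradient g b + μ • b) (a - b)
      = (inner ℝ (gradient g b) (a - b) : ℝ) + μ * inner ℝ b (a - b) := by
    rw [inner_add_left, real_inner_smul_left]
  rw [e1] at t1; rw [e2] at t2
  have key : (inner ℝ (gradient g a - gradient g b) (a - b) : ℝ)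
      = - (inner ℝ (gradient g a) (b - a) + inner ℝ (gradient g b) (a - b)) := by
    rw [inner_sub_left]
    rw [show (b - a : F) = -(a - b) by abel, inner_neg_right]
    ring
  have hnorm : (inner ℝ a (b - a) : ℝ) + inner ℝ b (a - b) = - ‖a - b‖ ^ 2 := by
    have : (inner ℝ a (b-a) : ℝ) + inner ℝ b (a-b) = - inner ℝ (a-b) (a-b) := by
      simp only [inner_sub_left, inner_sub_right]
      rw [real_inner_comm b a]
      ring
    rw [this, real_inner_self_eq_norm_sq]
  rw [key]
  have : (inner ℝ (gradient g a) (b - a) : ℝ) + inner ℝ (gradient g b) (a - b)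
      ≥ μ * ‖a - b‖ ^ 2 := by
    have hsum := add_le_add t1 t2
    have h3 : μ * inner ℝ a (b - a) + μ * inner ℝ b (a - b) = -(μ * ‖a - b‖ ^ 2) := by
      linear_combination μ * hnorm
    linarith [hsum, h3]
  linarith

lemma max_grad_zero {g : F → ℝ} (hg : Differentiable ℝ g) {y₀ : F}
    (h : IsMaxOn g univ y₀) : gradient g y₀ = 0 := by
  have hl : IsLocalMax g y₀ := h.isLocalMax Filter.univ_mem
  have hf : fderiv ℝ g y₀ = 0 := hl.fderiv_eq_zero
  show (InnerProductSpace.toDual ℝ F).symm (fderiv ℝ g y₀) = 0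
  rw [hf]; simp

lemma exists_max' {F : Type*} [NormedAddCommGroup F] [InnerProductSpace ℝ F]
    [CompleteSpace F] [ProperSpace F] {g : F → ℝ} (hg : Differentiable ℝ g)
    {μ : ℝ} (hμ : 0 < μ)
    (hc : ConcaveOn ℝ univ (fun y => g y + μ / 2 * ‖y‖ ^ 2)) :
    ∃ y₀, IsMaxOn g univ y₀ := by
  have hbd : ∀ b : F, g b ≤ g 0 + ‖gradient g 0‖ * ‖b‖ - μ / 2 * ‖b‖ ^ 2 := by
    intro b
    have t := tangent_le hc (grad_h hg μ 0) b
    have hin : (inner ℝ (gradient g 0 + μ • (0:F)) (b - 0) : ℝ)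
        ≤ ‖gradient g 0‖ * ‖b‖ := by
      simp only [smul_zero, add_zero, sub_zero]
      exact (real_inner_le_norm _ _)
    simp only [norm_zero] at t
    nlinarith [t, hin]
  set R : ℝ := 2 * ‖gradient g 0‖ / μ + 1 with hR
  have hRpos : 0 < R := by positivity
  obtain ⟨y₀, hy₀mem, hy₀⟩ := (isCompact_closedBall (0:F) R).exists_isMaxOn
    ⟨0, Metric.mem_closedBall_self hRpos.le⟩ (hg.continuous.continuousOn)
  refine ⟨y₀, ?_⟩
  intro y _
  by_cases hy : y ∈ Metric.closedBall (0:F) R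
  · exact hy₀ hy
  · have h0 : g 0 ≤ g y₀ := hy₀ (Metric.mem_closedBall_self hRpos.le)
    have hnorm : R < ‖y‖ := by
      simpa [Metric.mem_closedBall, dist_zero_right, not_le] using hy
    have hlt : g y < g 0 := by
      have hb := hbd y
      have h1 : ‖gradient g 0‖ * ‖y‖ - μ / 2 * ‖y‖ ^ 2 < 0 := by
        have hypos : 0 < ‖y‖ := lt_trans hRpos hnorm
        have h2 : 2 * ‖gradient g 0‖ / μ < ‖y‖ := by
          calc 2 * ‖gradient g 0‖ / μ < R := by rw [hR]; linarith
          _ < ‖y‖ := hnorm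
        have h3 : 2 * ‖gradient g 0‖ < μ * ‖y‖ := by
          rw [div_lt_iff₀ hμ] at h2; linarith [h2]
        nlinarith [hypos, h3]
      linarith
    exact le_of_lt (lt_of_lt_of_le hlt h0)

end Aux

section Pt

variable {dx dy : ℕ}

lemma pt_sub (x x' : Euc dx) (y y' : Euc dy) : pt x y - pt x' y' = pt (x - x') (y - y') := rfl

lemma pt_norm_sq (x : Euc dx) (y : Euc dy) : ‖pt x y‖ ^ 2 = ‖x‖ ^ 2 + ‖y‖ ^ 2 := by
  simpa [pt] using WithLp.prod_norm_sq_eq_of_L2 (pt x y)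

lemma pt_norm_x (x : Euc dx) : ‖pt x (0 : Euc dy)‖ = ‖x‖ := by simp [pt]

lemma pt_norm_le (x : Euc dx) (y : Euc dy) : ‖pt x y‖ ≤ ‖x‖ + ‖y‖ := by
  have h := pt_norm_sq x y
  nlinarith [norm_nonneg (pt x y), norm_nonneg x, norm_nonneg y,
    mul_nonneg (norm_nonneg x) (norm_nonneg y), h]

lemma pt_norm_fst_le (q : WithLp 2 (Euc dx × Euc dy)) : ‖q.fst‖ ≤ ‖q‖ := by
  have h := WithLp.prod_norm_sq_eq_of_L2 q
  nlinarith [norm_nonneg q, norm_nonneg q.fst, norm_nonneg q.snd, h]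

lemma pt_norm_snd_le (q : WithLp 2 (Euc dx × Euc dy)) : ‖q.snd‖ ≤ ‖q‖ := by
  have h := WithLp.prod_norm_sq_eq_of_L2 q
  nlinarith [norm_nonneg q, norm_nonneg q.fst, norm_nonneg q.snd, h]

/-- inclusion `y ↦ (0, y)` as a CLM -/
def iy : Euc dy →L[ℝ] WithLp 2 (Euc dx × Euc dy) :=
  (WithLp.prodContinuousLinearEquiv 2 ℝ (Euc dx) (Euc dy)).symm.toContinuousLinearMap.comp
    (ContinuousLinearMap.inr ℝ (Euc dx) (Euc dy))

def ix : Euc dx →L[ℝ] WithLp 2 (Euc dx × Euc dy) :=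
  (WithLp.prodContinuousLinearEquiv 2 ℝ (Euc dx) (Euc dy)).symm.toContinuousLinearMap.comp
    (ContinuousLinearMap.inl ℝ (Euc dx) (Euc dy))

lemma pt_eq_iy (x : Euc dx) (y : Euc dy) : pt x y = iy y + pt x 0 := by
  apply (WithLp.equiv 2 (Euc dx × Euc dy)).injective
  apply Prod.ext <;>
    simp [pt, iy, WithLp.toLp_fst, WithLp.toLp_snd, WithLp.add_fst, WithLp.add_snd]

lemma pt_eq_ix (x : Euc dx) (y : Euc dy) : pt x y = ix x + pt 0 y := by
  apply (WithLp.equiv 2 (Euc dx × Euc dy)).injective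
  apply Prod.ext <;>
    simp [pt, ix, WithLp.toLp_fst, WithLp.toLp_snd, WithLp.add_fst, WithLp.add_snd]

variable {f : WithLp 2 (Euc dx × Euc dy) → ℝ}

lemma partial_y (hdiff : Differentiable ℝ f) (x : Euc dx) (y : Euc dy) :
    HasGradientAt (fun y' => f (pt x y')) ((gradient f (pt x y)).snd) y := by
  have h1 : HasFDerivAt f
      (InnerProductSpace.toDual ℝ _ (gradient f (pt x y))) (pt x y) :=
    (hdiff _).hasGradientAt
  have h2 : HasFDerivAt (fun y' : Euc dy => iy (dx := dx) y' + pt x 0) (iy) y :=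
    (iy.hasFDerivAt).add_const (pt x 0)
  have h2' : HasFDerivAt (fun y' => pt x y') (iy) y := by
    rw [show (fun y' : Euc dy => pt x y') = (fun y' => iy (dx := dx) y' + pt x 0) from
      funext fun y' => pt_eq_iy x y']
    exact h2
  have h3 : HasFDerivAt (fun y' => f (pt x y'))
      ((InnerProductSpace.toDual ℝ _ (gradient f (pt x y))).comp iy) y := h1.comp y h2'
  rw [hasGradientAt_iff_hasFDerivAt]
  have e : InnerProductSpace.toDual ℝ (Euc dy) ((gradient f (pt x y)).snd) =
      (InnerProductSpace.toDual ℝ _ (gradient f (pt x y))).comp iy := by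
    ext v
    have h5 : (iy (dx := dx) v).fst = 0 := rfl
    have h4 : (iy (dx := dx) v).snd = v := rfl
    simp only [ContinuousLinearMap.comp_apply, InnerProductSpace.toDual_apply_apply]
    rw [WithLp.prod_inner_apply, show (iy (dx := dx) v).ofLp.1 = 0 from h5,
      show (iy (dx := dx) v).ofLp.2 = v from h4]; simp
  rw [e]; exact h3

lemma partial_x (hdiff : Differentiable ℝ f) (x : Euc dx) (y : Euc dy) :
    HasGradientAt (fun x' => f (pt x' y)) ((gradient f (pt x y)).fst) x := by
  have h1 : HasFDerivAt f
      (InnerProductSpace.toDual ℝ _ (gradient f (pt x y))) (pt x y) :=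
    (hdiff _).hasGradientAt
  have h2 : HasFDerivAt (fun x' : Euc dx => ix (dy := dy) x' + pt 0 y) (ix) x :=
    (ix.hasFDerivAt).add_const (pt 0 y)
  have h2' : HasFDerivAt (fun x' => pt x' y) (ix) x := by
    rw [show (fun x' : Euc dx => pt x' y) = (fun x' => ix (dy := dy) x' + pt 0 y) from
      funext fun x' => pt_eq_ix x' y]
    exact h2
  have h3 : HasFDerivAt (fun x' => f (pt x' y))
      ((InnerProductSpace.toDual ℝ _ (gradient f (pt x y))).comp ix) x := h1.comp x h2'
  rw [hasGradientAt_iff_hasFDerivAt]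
  have e : InnerProductSpace.toDual ℝ (Euc dx) ((gradient f (pt x y)).fst) =
      (InnerProductSpace.toDual ℝ _ (gradient f (pt x y))).comp ix := by
    ext v
    have h5 : (ix (dy := dy) v).fst = v := rfl
    have h4 : (ix (dy := dy) v).snd = 0 := rfl
    simp only [ContinuousLinearMap.comp_apply, InnerProductSpace.toDual_apply_apply]
    rw [WithLp.prod_inner_apply, show (ix (dy := dy) v).ofLp.1 = v from h5,
      show (ix (dy := dy) v).ofLp.2 = 0 from h4]; simp
  rw [e]; exact h3

end Pt

/-- Lemma 4.3 of Lin et al.: if `f : ℝ^{d_x} × ℝ^{d_y} → ℝ` is `ℓ`-smooth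
and `f (x, ·)` is `μ`-strongly concave for every `x`, with `κ := ℓ/μ`, then the maximizer
`y*(x) := argmax_y f (x, y)` is well-defined (exists and is unique) and `κ`-Lipschitz,
`Φ (x) := max_y f (x, y)` is differentiable with `∇Φ (x) = ∇ₓ f (x, y*(x))`, and `∇Φ` is
`(ℓ + κ ℓ)`-Lipschitz. -/
theorem max_function_smoothness
    {dx dy : ℕ} (f : WithLp 2 (Euc dx × Euc dy) → ℝ) (ℓ μ : ℝ)
    (hℓ : 0 < ℓ) (hμ : 0 < μ)
    (hdiff : Differentiable ℝ f)
    (hsmooth : ∀ q r, ‖gradient f q - gradient f r‖ ≤ ℓ * ‖q - r‖)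
    (hconc : ∀ x : Euc dx,
      ConcaveOn ℝ univ (fun y : Euc dy => f (pt x y) + μ / 2 * ‖y‖ ^ 2)) :
    ∃ ystar : Euc dx → Euc dy,
      (∀ x, IsMaxOn (fun y => f (pt x y)) univ (ystar x)) ∧
      (∀ x y, IsMaxOn (fun y' => f (pt x y')) univ y → y = ystar x) ∧
      (∀ x x', ‖ystar x - ystar x'‖ ≤ ℓ / μ * ‖x - x'‖) ∧
      (∀ x, HasGradientAt (fun x' => ⨆ y, f (pt x' y))
        (gradient (fun x' => f (pt x' (ystar x))) x) x) ∧
      (∀ x x', ‖gradient (fun x'' => ⨆ y, f (pt x'' y)) x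
          - gradient (fun x'' => ⨆ y, f (pt x'' y)) x'‖ ≤ (ℓ + ℓ / μ * ℓ) * ‖x - x'‖) := by
  have hgy : ∀ x : Euc dx, Differentiable ℝ (fun y => f (pt x y)) :=
    fun x y => (partial_y hdiff x y).differentiableAt
  have hgrad_y : ∀ (x : Euc dx) (y : Euc dy),
      gradient (fun y' => f (pt x y')) y = (gradient f (pt x y)).snd :=
    fun x y => (partial_y hdiff x y).gradient
  have hex : ∀ x : Euc dx, ∃ y₀, IsMaxOn (fun y => f (pt x y)) univ y₀ :=
    fun x => exists_max' (hgy x) hμ (hconc x)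
  choose ystar hmax using hex
  -- gradient in y vanishes at the maximizer
  have hz : ∀ x : Euc dx, (gradient f (pt x (ystar x))).snd = 0 := by
    intro x
    rw [← hgrad_y x (ystar x)]
    exact max_grad_zero (hgy x) (hmax x)
  -- uniqueness
  have huniq : ∀ (x : Euc dx) (y : Euc dy),
      IsMaxOn (fun y' => f (pt x y')) univ y → y = ystar x := by
    intro x y hy
    have hzy : gradient (fun y' => f (pt x y')) y = 0 := max_grad_zero (hgy x) hy
    have hzs : gradient (fun y' => f (pt x y')) (ystar x) = 0 :=
      max_grad_zero (hgy x) (hmax x)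
    have sm := strong_mono (hgy x) (hconc x) y (ystar x)
    rw [hzy, hzs] at sm
    simp only [sub_zero, inner_zero_left] at sm
    have h1 : ‖y - ystar x‖ ^ 2 ≤ 0 := by nlinarith [sm, hμ]
    have hn : ‖y - ystar x‖ = 0 := by nlinarith [norm_nonneg (y - ystar x), h1]
    exact sub_eq_zero.mp (norm_eq_zero.mp hn)
  -- Lipschitz continuity of ystar
  have hlip : ∀ x x' : Euc dx, ‖ystar x - ystar x'‖ ≤ ℓ / μ * ‖x - x'‖ := by
    intro x x'
    set a := ystar x
    set b := ystar x'
    have sm := strong_mono (hgy x) (hconc x) a b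
    rw [hgrad_y x a, hgrad_y x b, hz x] at sm
    rw [zero_sub, inner_neg_left] at sm
    have key : μ * ‖a - b‖ ^ 2 ≤ inner ℝ ((gradient f (pt x b)).snd) (a - b) := by linarith
    have hSnorm : ‖(gradient f (pt x b)).snd‖ ≤ ℓ * ‖x - x'‖ := by
      have e : (gradient f (pt x b)).snd
          = (gradient f (pt x b) - gradient f (pt x' b)).snd := by
        rw [WithLp.sub_snd, hz x', sub_zero]
      rw [e]
      calc ‖(gradient f (pt x b) - gradient f (pt x' b)).snd‖
          ≤ ‖gradient f (pt x b) - gradient f (pt x' b)‖ := pt_norm_snd_le _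
        _ ≤ ℓ * ‖pt x b - pt x' b‖ := hsmooth _ _
        _ = ℓ * ‖x - x'‖ := by rw [pt_sub, sub_self, pt_norm_x]
    have hinner : (inner ℝ ((gradient f (pt x b)).snd) (a - b) : ℝ)
        ≤ ℓ * ‖x - x'‖ * ‖a - b‖ := by
      calc (inner ℝ ((gradient f (pt x b)).snd) (a - b) : ℝ)
          ≤ ‖(gradient f (pt x b)).snd‖ * ‖a - b‖ := real_inner_le_norm _ _
        _ ≤ ℓ * ‖x - x'‖ * ‖a - b‖ :=
            mul_le_mul_of_nonneg_right hSnorm (norm_nonneg _)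
    have hmain : μ * ‖a - b‖ ^ 2 ≤ ℓ * ‖x - x'‖ * ‖a - b‖ := le_trans key hinner
    by_cases hab : ‖a - b‖ = 0
    · rw [hab]; positivity
    · have habpos : 0 < ‖a - b‖ := lt_of_le_of_ne (norm_nonneg _) (Ne.symm hab)
      have h1 : μ * ‖a - b‖ ≤ ℓ * ‖x - x'‖ := by nlinarith [hmain, habpos]
      rw [show ℓ / μ * ‖x - x'‖ = ℓ * ‖x - x'‖ / μ by ring, le_div_iff₀ hμ]
      nlinarith [h1, hμ]
  -- the value of the sup
  have hPhi : ∀ x : Euc dx, (⨆ y, f (pt x y)) = f (pt x (ystar x)) := by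
    intro x
    have hbdd : BddAbove (Set.range fun y => f (pt x y)) := by
      refine ⟨f (pt x (ystar x)), ?_⟩
      rintro z ⟨y, rfl⟩
      exact hmax x (mem_univ y)
    apply le_antisymm
    · exact ciSup_le fun y => hmax x (mem_univ y)
    · exact le_ciSup hbdd (ystar x)
  -- Danskin: differentiability of Φ
  have hDanskin : ∀ x : Euc dx, HasGradientAt (fun x' => ⨆ y, f (pt x' y))
      ((gradient f (pt x (ystar x))).fst) x := by
    intro x
    set y0 := ystar x with hy0
    set C : ℝ := ℓ * (ℓ / μ) with hC
    have hCpos : 0 < C := by positivity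
    have hlb : ∀ x' : Euc dx, f (pt x' y0) ≤ (⨆ y, f (pt x' y)) := by
      intro x'
      rw [hPhi x']
      exact hmax x' (mem_univ y0)
    have hub : ∀ x' : Euc dx, (⨆ y, f (pt x' y)) ≤ f (pt x' y0) + C * ‖x' - x‖ ^ 2 := by
      intro x'
      rw [hPhi x']
      set b := ystar x' with hb
      have t := tangent_le (hconc x') (grad_h (hgy x') μ y0) b
      rw [hgrad_y x' y0] at t
      have e : (inner ℝ ((gradient f (pt x' y0)).snd + μ • y0) (b - y0) : ℝ)
          = inner ℝ ((gradient f (pt x' y0)).snd) (b - y0) + μ * inner ℝ y0 (b - y0) := by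
        rw [inner_add_left, real_inner_smul_left]
      rw [e] at t
      have hsq : μ / 2 * ‖y0‖ ^ 2 + μ * inner ℝ y0 (b - y0) - μ / 2 * ‖b‖ ^ 2
          = -(μ / 2 * ‖b - y0‖ ^ 2) := by
        have h1 : ‖b - y0‖ ^ 2 = ‖b‖ ^ 2 - 2 * inner ℝ b y0 + ‖y0‖ ^ 2 := by
          rw [← real_inner_self_eq_norm_sq, inner_sub_left, inner_sub_right,
            inner_sub_right, real_inner_self_eq_norm_sq, real_inner_self_eq_norm_sq,
            real_inner_comm y0 b]
          ring
        have h2 : (inner ℝ y0 (b - y0) : ℝ) = inner ℝ y0 b - ‖y0‖ ^ 2 := by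
          rw [inner_sub_right, real_inner_self_eq_norm_sq]
        rw [h1, h2, real_inner_comm y0 b]
        ring
      have t2 : f (pt x' b) ≤ f (pt x' y0)
          + inner ℝ ((gradient f (pt x' y0)).snd) (b - y0) := by
        nlinarith [t, hsq, mul_nonneg (le_of_lt hμ) (sq_nonneg ‖b - y0‖)]
      have hgnorm : ‖(gradient f (pt x' y0)).snd‖ ≤ ℓ * ‖x' - x‖ := by
        have e2 : (gradient f (pt x' y0)).snd
            = (gradient f (pt x' y0) - gradient f (pt x y0)).snd := by
          rw [WithLp.sub_snd, hz x, sub_zero]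
        rw [e2]
        calc ‖(gradient f (pt x' y0) - gradient f (pt x y0)).snd‖
            ≤ ‖gradient f (pt x' y0) - gradient f (pt x y0)‖ := pt_norm_snd_le _
          _ ≤ ℓ * ‖pt x' y0 - pt x y0‖ := hsmooth _ _
          _ = ℓ * ‖x' - x‖ := by rw [pt_sub, sub_self, pt_norm_x]
      have hbnorm : ‖b - y0‖ ≤ ℓ / μ * ‖x' - x‖ := hlip x' x
      have hip : (inner ℝ ((gradient f (pt x' y0)).snd) (b - y0) : ℝ)
          ≤ C * ‖x' - x‖ ^ 2 := by
        calc (inner ℝ ((gradient f (pt x' y0)).snd) (b - y0) : ℝ)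
            ≤ ‖(gradient f (pt x' y0)).snd‖ * ‖b - y0‖ := real_inner_le_norm _ _
          _ ≤ (ℓ * ‖x' - x‖) * (ℓ / μ * ‖x' - x‖) := by
              apply mul_le_mul hgnorm hbnorm (norm_nonneg _)
              positivity
          _ = C * ‖x' - x‖ ^ 2 := by rw [hC]; ring
      linarith [t2, hip]
    have hpx := partial_x hdiff x y0
    have hh : HasFDerivAt
        (fun x' => (⨆ y, f (pt x' y)) - f (pt x' y0)) (0 : Euc dx →L[ℝ] ℝ) x := by
      rw [hasFDerivAt_iff_isLittleO_nhds_zero]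
      rw [Asymptotics.isLittleO_iff]
      intro c hc
      have hev : ∀ᶠ v : Euc dx in nhds 0, ‖v‖ ≤ c / C := by
        have hmm : Metric.closedBall (0 : Euc dx) (c / C) ∈ nhds (0 : Euc dx) :=
          Metric.closedBall_mem_nhds 0 (by positivity)
        filter_upwards [hmm] with v hv
        simpa [Metric.mem_closedBall, dist_zero_right] using hv
      filter_upwards [hev] with v hv
      have h1 : (0:ℝ) ≤ (⨆ y, f (pt (x + v) y)) - f (pt (x + v) y0) := by
        linarith [hlb (x + v)]
      have h2 : (⨆ y, f (pt (x + v) y)) - f (pt (x + v) y0) ≤ C * ‖v‖ ^ 2 := by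
        have h2' := hub (x + v)
        have hx' : x + v - x = v := by abel
        rw [hx'] at h2'
        linarith [h2']
      have h3 : (⨆ y, f (pt x y)) - f (pt x y0) = 0 := by
        rw [hPhi x]; ring
      simp only [ContinuousLinearMap.zero_apply, sub_zero, h3]
      rw [Real.norm_eq_abs, abs_of_nonneg h1]
      calc (⨆ y, f (pt (x + v) y)) - f (pt (x + v) y0) ≤ C * ‖v‖ ^ 2 := h2
        _ = C * ‖v‖ * ‖v‖ := by ring
        _ ≤ C * (c / C) * ‖v‖ := by
            apply mul_le_mul_of_nonneg_right _ (norm_nonneg v)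
            exact mul_le_mul_of_nonneg_left hv (le_of_lt hCpos)
        _ = c * ‖v‖ := by field_simp
    rw [hasGradientAt_iff_hasFDerivAt] at hpx ⊢
    have hsum := hpx.add hh
    have heq : (fun x' => f (pt x' y0) + ((⨆ y, f (pt x' y)) - f (pt x' y0)))
        = fun x' => ⨆ y, f (pt x' y) := by
      funext x'; ring
    rw [← heq]
    rw [add_zero] at hsum
    exact hsum
  have hgradPhi : ∀ x : Euc dx,
      gradient (fun x'' => ⨆ y, f (pt x'' y)) x = (gradient f (pt x (ystar x))).fst :=
    fun x => (hDanskin x).gradient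
  refine ⟨ystar, hmax, huniq, hlip, ?_, ?_⟩
  · intro x
    have hD := hDanskin x
    rwa [(partial_x hdiff x (ystar x)).gradient]
  · intro x x'
    rw [hgradPhi x, hgradPhi x']
    have e : (gradient f (pt x (ystar x))).fst - (gradient f (pt x' (ystar x'))).fst
        = (gradient f (pt x (ystar x)) - gradient f (pt x' (ystar x'))).fst := by
      rw [WithLp.sub_fst]
    rw [e]
    calc ‖(gradient f (pt x (ystar x)) - gradient f (pt x' (ystar x'))).fst‖
        ≤ ‖gradient f (pt x (ystar x)) - gradient f (pt x' (ystar x'))‖ := pt_norm_fst_le _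
      _ ≤ ℓ * ‖pt x (ystar x) - pt x' (ystar x')‖ := hsmooth _ _
      _ ≤ ℓ * (‖x - x'‖ + ‖ystar x - ystar x'‖) := by
          apply mul_le_mul_of_nonneg_left _ (le_of_lt hℓ)
          rw [pt_sub]
          exact pt_norm_le _ _
      _ ≤ ℓ * (‖x - x'‖ + ℓ / μ * ‖x - x'‖) := by
          apply mul_le_mul_of_nonneg_left _ (le_of_lt hℓ)
          linarith [hlip x x']
      _ = (ℓ + ℓ / μ * ℓ) * ‖x - x'‖ := by ring
end
end

section
/- Let h : ℝ^d → ℝ be differentiable with D-Lipschitz gradient, let g ∈ ℝ^d with g ≠ 0, let η > 0, and set x' := x − η g/‖g‖. Then h(x') ≤ h(x) − η‖∇h(x)‖ + 2η‖∇h(x) − g‖ + Dη²/2. -/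
noncomputable section

open RealInnerProductSpace

/-- The descent lemma: a function with `D`-Lipschitz gradient satisfies
`h (x + v) ≤ h x + ⟪∇h x, v⟫ + D ‖v‖² / 2`. -/
theorem descent_lemma {d : ℕ} (h : Euc d → ℝ) (D : ℝ)
    (hdiff : Differentiable ℝ h)
    (hlip : ∀ u v, ‖gradient h u - gradient h v‖ ≤ D * ‖u - v‖)
    (x v : Euc d) :
    h (x + v) ≤ h x + ⟪gradient h x, v⟫ + D * ‖v‖ ^ 2 / 2 := by
  have hline : ∀ t : ℝ, HasDerivAt (fun t : ℝ => x + t • v) v t := by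
    intro t
    simpa using ((hasDerivAt_id t).smul_const v).const_add x
  have hderiv : ∀ t : ℝ, HasDerivAt (fun t : ℝ => h (x + t • v))
      (⟪gradient h (x + t • v), v⟫) t := by
    intro t
    have hG := (hdiff (x + t • v)).hasGradientAt
    rw [hasGradientAt_iff_hasFDerivAt] at hG
    have hc := hG.comp_hasDerivAt t (hline t)
    simp only [Function.comp_def] at hc
    simpa using hc
  have hcont : Continuous fun t : ℝ => ⟪gradient h (x + t • v), v⟫ := by
    have hgc : Continuous (gradient h) := by
      rcases le_or_gt D 0 with hD | hD
      · have : ∀ u w, gradient h u = gradient h w := by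
          intro u w
          have := hlip u w
          have h0 : ‖gradient h u - gradient h w‖ ≤ 0 :=
            this.trans (mul_nonpos_of_nonpos_of_nonneg hD (norm_nonneg _))
          have := le_antisymm h0 (norm_nonneg _)
          rwa [norm_eq_zero, sub_eq_zero] at this
        have : gradient h = fun _ => gradient h x := funext fun u => this u x
        rw [this]; exact continuous_const
      · exact (LipschitzWith.of_dist_le_mul (K := ⟨D, hD.le⟩) (by
          intro u w
          rw [dist_eq_norm, dist_eq_norm]; exact hlip u w)).continuous
    exact ((hgc.comp (by continuity)).inner continuous_const)
  have hFTC : h (x + v) - h x = ∫ t in (0:ℝ)..1, ⟪gradient h (x + t • v), v⟫ := by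
    have := intervalIntegral.integral_eq_sub_of_hasDerivAt
      (f := fun t : ℝ => h (x + t • v)) (a := 0) (b := 1)
      (fun t _ => hderiv t) (hcont.intervalIntegrable 0 1)
    simp only [one_smul, zero_smul, add_zero] at this
    rw [← this]
  have hbound : ∫ t in (0:ℝ)..1, ⟪gradient h (x + t • v), v⟫
      ≤ ∫ t in (0:ℝ)..1, (⟪gradient h x, v⟫ + D * ‖v‖ ^ 2 * t) := by
    apply intervalIntegral.integral_mono_on (by norm_num)
      (hcont.intervalIntegrable 0 1)
      ((continuous_const.add (continuous_const.mul continuous_id)).intervalIntegrable 0 1)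
    intro t ht
    simp only [Pi.add_apply, Pi.mul_apply, id_eq]
    have key : ⟪gradient h (x + t • v) - gradient h x, v⟫ ≤ D * ‖v‖ ^ 2 * t := by
      calc ⟪gradient h (x + t • v) - gradient h x, v⟫
          ≤ ‖gradient h (x + t • v) - gradient h x‖ * ‖v‖ :=
            real_inner_le_norm _ _
        _ ≤ (D * ‖(x + t • v) - x‖) * ‖v‖ :=
            mul_le_mul_of_nonneg_right (hlip _ _) (norm_nonneg _)
        _ = D * ‖v‖ ^ 2 * t := by
            rw [add_sub_cancel_left, norm_smul, Real.norm_eq_abs,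
              abs_of_nonneg ht.1]
            ring
    have := inner_sub_left (𝕜 := ℝ) (gradient h (x + t • v)) (gradient h x) v
    linarith [key, this ▸ key]
  have hint : ∫ t in (0:ℝ)..1, (⟪gradient h x, v⟫ + D * ‖v‖ ^ 2 * t)
      = ⟪gradient h x, v⟫ + D * ‖v‖ ^ 2 / 2 := by
    have : (fun t : ℝ => ⟪gradient h x, v⟫ + D * ‖v‖ ^ 2 * t)
        = fun t : ℝ => ⟪gradient h x, v⟫ + (D * ‖v‖ ^ 2) * id t := rfl
    rw [this, intervalIntegral.integral_add (g := fun t : ℝ => (D * ‖v‖ ^ 2) * id t)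
      (intervalIntegrable_const)
      ((continuous_const.mul continuous_id).intervalIntegrable 0 1)]
    rw [intervalIntegral.integral_const_mul]
    simp [integral_id]
    ring
  linarith [hFTC ▸ hbound, hint ▸ hbound]

/-- descent step of normalized gradient descent: if `h` has a
`D`-Lipschitz gradient, `g ≠ 0`, `η > 0` and `x' = x - η g/‖g‖`, then
`h x' ≤ h x - η ‖∇h x‖ + 2 η ‖∇h x - g‖ + D η² / 2`. -/
theorem normalized_descent_step
    {d : ℕ} (h : Euc d → ℝ) (D : ℝ)
    (hdiff : Differentiable ℝ h)
    (hlip : ∀ u v, ‖gradient h u - gradient h v‖ ≤ D * ‖u - v‖)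
    (g : Euc d) (hg : g ≠ 0) (η : ℝ) (hη : 0 < η) (x : Euc d) :
    h (x - η • (‖g‖⁻¹ • g))
      ≤ h x - η * ‖gradient h x‖ + 2 * η * ‖gradient h x - g‖ + D * η ^ 2 / 2 := by
  have hgn : (0:ℝ) < ‖g‖ := norm_pos_iff.mpr hg
  set v : Euc d := -(η • (‖g‖⁻¹ • g)) with hv
  have hxv : x - η • (‖g‖⁻¹ • g) = x + v := by rw [hv]; abel
  have hnv : ‖v‖ = η := by
    rw [hv, norm_neg, norm_smul, norm_smul, norm_inv, norm_norm,
      Real.norm_eq_abs, abs_of_pos hη, inv_mul_cancel₀ hgn.ne', mul_one]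
  have hmain := descent_lemma h D hdiff hlip x v
  rw [hxv]
  have hinner : ⟪gradient h x, v⟫ ≤ -(η * ‖gradient h x‖) + 2 * η * ‖gradient h x - g‖ := by
    have h1 : ⟪gradient h x, v⟫
        = -(η * ‖g‖⁻¹) * (⟪g, g⟫ + ⟪gradient h x - g, g⟫) := by
      rw [hv, inner_neg_right, inner_smul_right, inner_smul_right,
        inner_sub_left]
      ring
    have h2 : ⟪g, g⟫ = ‖g‖ ^ 2 := real_inner_self_eq_norm_sq g
    have h3 : -⟪gradient h x - g, g⟫ ≤ ‖gradient h x - g‖ * ‖g‖ := by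
      have := real_inner_le_norm (-(gradient h x - g)) g
      rwa [inner_neg_left, norm_neg] at this
    have h4 : ‖gradient h x‖ - ‖gradient h x - g‖ ≤ ‖g‖ := by
      have := norm_sub_norm_le (gradient h x) (gradient h x - g)
      simpa using this
    have h5 : ⟪gradient h x, v⟫ ≤ -(η * ‖g‖) + η * ‖gradient h x - g‖ := by
      rw [h1, h2]
      have : -(η * ‖g‖⁻¹) * (‖g‖ ^ 2 + ⟪gradient h x - g, g⟫)
          = -(η * ‖g‖) + (η * ‖g‖⁻¹) * (-⟪gradient h x - g, g⟫) := by
        field_simp; ring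
      rw [this]
      have : (η * ‖g‖⁻¹) * (-⟪gradient h x - g, g⟫)
          ≤ (η * ‖g‖⁻¹) * (‖gradient h x - g‖ * ‖g‖) :=
        mul_le_mul_of_nonneg_left h3 (by positivity)
      have heq : (η * ‖g‖⁻¹) * (‖gradient h x - g‖ * ‖g‖) = η * ‖gradient h x - g‖ := by
        field_simp
      linarith [heq ▸ this]
    nlinarith [h4, h5, hη.le]
  rw [hnv] at hmain
  linarith [hmain, hinner]
end
end

section
/- Let h : ℝ^{d_y} → ℝ be μ-strongly convex and ℓ-smooth with minimizer y*, let η ≤ 1/ℓ, let g_0, …, g_K ∈ ℝ^{d_y} be arbitrary vectors, define the iterates ŷ_{k+1} := ŷ_k − η g_k for k = 0, …, K, and set ω_k := g_k − ∇h(ŷ_k). Then ‖ŷ_{K+1} − y*‖² ≤ (1 − ημ)^{K+1} ‖ŷ_0 − y*‖² + η² Σ_{k=0}^K (1 − ημ)^{K−k} ‖ω_k‖² − 2η Σ_{k=0}^K (1 − ημ)^{K−k} ⟨ŷ_k − y* − η∇h(ŷ_k), ω_k⟩. -/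
open Set

noncomputable section

open InnerProductSpace
variable {E : Type*} [NormedAddCommGroup E] [InnerProductSpace ℝ E] [CompleteSpace E]

lemma grad_fderiv {f : E → ℝ} {x : E} (hf : DifferentiableAt ℝ f x) (v : E) :
    (inner ℝ (gradient f x) v : ℝ) = fderiv ℝ f x v := by
  have h := (hasGradientAt_iff_hasFDerivAt.mp hf.hasGradientAt).fderiv
  rw [h, InnerProductSpace.toDual_apply_apply]

lemma hasDerivAt_comp_line (f : E → ℝ) (hf : Differentiable ℝ f) (y v : E) (t : ℝ) :
    HasDerivAt (fun s : ℝ => f (y + s • v))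
      (inner ℝ (gradient f (y + t • v)) v : ℝ) t := by
  have h1 : HasDerivAt (fun s : ℝ => y + s • v) v t := by
    simpa using ((hasDerivAt_id t).smul_const v).const_add y
  have h2 := (hf (y + t • v)).hasFDerivAt.comp_hasDerivAt t h1
  rwa [← grad_fderiv (hf _) v] at h2

/-- gradient inequality for a differentiable convex function -/
lemma convex_grad_ineq (f : E → ℝ) (hf : Differentiable ℝ f)
    (hc : ConvexOn ℝ univ f) (y z : E) :
    f y + (inner ℝ (gradient f y) (z - y) : ℝ) ≤ f z := by
  set v := z - y with hv
  have hgc : ConvexOn ℝ univ (fun t : ℝ => f (y + t • v)) := by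
    have hcomp := hc.comp_affineMap (AffineMap.lineMap y z)
    have he : (fun t : ℝ => f (y + t • v)) = f ∘ (AffineMap.lineMap y z) := by
      funext t
      show f (y + t • v) = f (AffineMap.lineMap y z t)
      rw [AffineMap.lineMap_apply_module]
      congr 1
      rw [hv]
      module
    rw [he]
    simpa using hcomp
  have hd := hasDerivAt_comp_line f hf y v 0
  rw [zero_smul, add_zero] at hd
  have hsl := hgc.le_slope_of_hasDerivAt (mem_univ 0) (mem_univ 1) one_pos hd
  rw [slope_def_field] at hsl
  have h1 : y + (1 : ℝ) • v = z := by rw [one_smul, hv]; abel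
  have h0 : y + (0 : ℝ) • v = y := by rw [zero_smul, add_zero]
  rw [h1, h0] at hsl
  simp at hsl
  linarith [grad_fderiv (hf y) v]

/-- descent lemma -/
lemma descent_lemma_s13 (f : E → ℝ) (hf : Differentiable ℝ f) (ℓ : ℝ)
    (hlip : ∀ u v, ‖gradient f u - gradient f v‖ ≤ ℓ * ‖u - v‖) (y z : E) :
    f z ≤ f y + (inner ℝ (gradient f y) (z - y) : ℝ) + ℓ / 2 * ‖z - y‖ ^ 2 := by
  set v := z - y with hv
  set F : ℝ → ℝ := fun t =>
    f (y + t • v) - t * (inner ℝ (gradient f y) v : ℝ) - ℓ * t ^ 2 / 2 * ‖v‖ ^ 2 with hF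
  have hF' : ∀ t : ℝ, HasDerivAt F
      ((inner ℝ (gradient f (y + t • v)) v : ℝ) - (inner ℝ (gradient f y) v : ℝ)
        - ℓ * t * ‖v‖ ^ 2) t := by
    intro t
    have h1 := hasDerivAt_comp_line f hf y v t
    have h2 : HasDerivAt (fun t : ℝ => t * (inner ℝ (gradient f y) v : ℝ))
        (inner ℝ (gradient f y) v : ℝ) t := by
      simpa using (hasDerivAt_id t).mul_const (inner ℝ (gradient f y) v : ℝ)
    have h3 : HasDerivAt (fun t : ℝ => ℓ * t ^ 2 / 2 * ‖v‖ ^ 2) (ℓ * t * ‖v‖ ^ 2) t := by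
      have := (((hasDerivAt_pow 2 t).const_mul ℓ).div_const 2).mul_const (‖v‖ ^ 2)
      refine this.congr_deriv ?_
      rw [show (2:ℕ) - 1 = 1 from rfl, pow_one]; push_cast; ring
    exact (h1.sub h2).sub h3
  have hdiffF : Differentiable ℝ F := fun t => (hF' t).differentiableAt
  have hmono : AntitoneOn F (Icc 0 1) := by
    apply antitoneOn_of_deriv_nonpos (convex_Icc 0 1) hdiffF.continuous.continuousOn
      (hdiffF.differentiableOn)
    intro t ht
    rw [interior_Icc] at ht
    rw [(hF' t).deriv]
    have hb : (inner ℝ (gradient f (y + t • v)) v : ℝ) - (inner ℝ (gradient f y) v : ℝ)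
        ≤ ℓ * t * ‖v‖ ^ 2 := by
      have h1 : (inner ℝ (gradient f (y + t • v)) v : ℝ) - (inner ℝ (gradient f y) v : ℝ)
          = inner ℝ (gradient f (y + t • v) - gradient f y) v := by rw [inner_sub_left]
      rw [h1]
      calc (inner ℝ (gradient f (y + t • v) - gradient f y) v : ℝ)
          ≤ ‖gradient f (y + t • v) - gradient f y‖ * ‖v‖ := real_inner_le_norm _ _
        _ ≤ (ℓ * ‖(y + t • v) - y‖) * ‖v‖ := by
            apply mul_le_mul_of_nonneg_right (hlip _ _) (norm_nonneg _)
        _ = ℓ * t * ‖v‖ ^ 2 := by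
            rw [add_sub_cancel_left, norm_smul, Real.norm_eq_abs, abs_of_pos ht.1]
            ring
    linarith
  have hle := hmono (left_mem_Icc.mpr zero_le_one) (right_mem_Icc.mpr zero_le_one) zero_le_one
  have h1 : y + (1 : ℝ) • v = z := by rw [one_smul, hv]; abel
  have h0 : y + (0 : ℝ) • v = y := by rw [zero_smul, add_zero]
  simp only [hF, h1, h0, one_mul, one_pow, mul_one, mul_zero, zero_mul, sub_zero,
    zero_pow, zero_div] at hle
  · linarith

lemma gradient_sub_inner (f : E → ℝ) (hf : Differentiable ℝ f) (c : E) (w : E) :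
    gradient (fun z => f z - (inner ℝ c z : ℝ)) w = gradient f w - c := by
  have hD : HasFDerivAt (fun z : E => f z - (inner ℝ c z : ℝ))
      (fderiv ℝ f w - innerSL ℝ c) w :=
    ((hf w).hasFDerivAt).sub ((innerSL ℝ c).hasFDerivAt)
  have hG : HasGradientAt (fun z : E => f z - (inner ℝ c z : ℝ)) (gradient f w - c) w := by
    rw [hasGradientAt_iff_hasFDerivAt]
    refine hD.congr_fderiv ?_
    refine ContinuousLinearMap.ext fun u => ?_
    simp only [InnerProductSpace.toDual_apply_apply, inner_sub_left,
      ContinuousLinearMap.sub_apply, innerSL_apply_apply]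
    rw [grad_fderiv (hf w) u]
  exact hG.gradient

lemma diff_sub_inner (f : E → ℝ) (hf : Differentiable ℝ f) (c : E) :
    Differentiable ℝ (fun z : E => f z - (inner ℝ c z : ℝ)) :=
  hf.sub (innerSL ℝ c).differentiable

lemma gradient_sub_half_norm_sq (f : E → ℝ) (hf : Differentiable ℝ f) (μ : ℝ) (w : E) :
    gradient (fun z => f z - μ / 2 * ‖z‖ ^ 2) w = gradient f w - μ • w := by
  have h2 : HasFDerivAt (fun z : E => μ / 2 * ‖z‖ ^ 2)
      ((μ / 2) • (2 • (innerSL ℝ w).comp (ContinuousLinearMap.id ℝ E))) w := by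
    have := (hasFDerivAt_id w).norm_sq.const_mul (μ / 2)
    simpa using this
  have hD : HasFDerivAt (fun z : E => f z - μ / 2 * ‖z‖ ^ 2)
      (fderiv ℝ f w - (μ / 2) • (2 • (innerSL ℝ w).comp (ContinuousLinearMap.id ℝ E))) w :=
    (hf w).hasFDerivAt.sub h2
  have hG : HasGradientAt (fun z : E => f z - μ / 2 * ‖z‖ ^ 2) (gradient f w - μ • w) w := by
    rw [hasGradientAt_iff_hasFDerivAt]
    refine hD.congr_fderiv ?_
    refine ContinuousLinearMap.ext fun u => ?_
    simp only [InnerProductSpace.toDual_apply_apply, inner_sub_left,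
      ContinuousLinearMap.sub_apply, ContinuousLinearMap.smul_apply,
      ContinuousLinearMap.coe_smul', Pi.smul_apply, ContinuousLinearMap.comp_apply,
      ContinuousLinearMap.id_apply, innerSL_apply_apply, inner_smul_left,
      RCLike.conj_to_real, smul_eq_mul]
    rw [grad_fderiv (hf w) u]
    ring
  exact hG.gradient

lemma diff_half_norm_sq (μ : ℝ) : Differentiable ℝ (fun z : E => μ / 2 * ‖z‖ ^ 2) := by
  have : Differentiable ℝ (fun z : E => ‖z‖ ^ 2) := by
    simpa using (differentiable_id (𝕜 := ℝ) (E := E)).norm_sq ℝ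
  exact this.const_mul (μ / 2)

/-- cocoercivity-style improved gradient inequality for convex `ℓ`-smooth `f` -/
lemma coco (f : E → ℝ) (hf : Differentiable ℝ f) (hc : ConvexOn ℝ univ f) (ℓ : ℝ) (hℓ : 0 < ℓ)
    (hlip : ∀ u v, ‖gradient f u - gradient f v‖ ≤ ℓ * ‖u - v‖) (y z : E) :
    f y + (inner ℝ (gradient f y) (z - y) : ℝ)
      + 1 / (2 * ℓ) * ‖gradient f z - gradient f y‖ ^ 2 ≤ f z := by
  set c := gradient f y with hc'
  set φ : E → ℝ := fun w => f w - (inner ℝ c w : ℝ) with hφ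
  have hφdiff : Differentiable ℝ φ := diff_sub_inner f hf c
  have hφgrad : ∀ w, gradient φ w = gradient f w - c := gradient_sub_inner f hf c
  have hφconv : ConvexOn ℝ univ φ := by
    refine ⟨convex_univ, fun x _ w _ a b ha hb hab => ?_⟩
    have := hc.2 (mem_univ x) (mem_univ w) ha hb hab
    simp only [smul_eq_mul] at this
    simp only [hφ, inner_add_right, inner_smul_right, smul_eq_mul]
    linarith [this]
  have hφlip : ∀ u v, ‖gradient φ u - gradient φ v‖ ≤ ℓ * ‖u - v‖ := by
    intro u v
    rw [hφgrad, hφgrad]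
    simpa using hlip u v
  set G := gradient φ z with hG
  -- y minimizes φ
  have hmin : φ y ≤ φ (z - ℓ⁻¹ • G) := by
    have := convex_grad_ineq φ hφdiff hφconv y (z - ℓ⁻¹ • G)
    rw [hφgrad y] at this
    simp only [hc', sub_self, inner_zero_left, add_zero] at this
    exact this
  -- descent lemma at z
  have hdesc : φ (z - ℓ⁻¹ • G) ≤ φ z - 1 / (2 * ℓ) * ‖G‖ ^ 2 := by
    have := descent_lemma_s13 φ hφdiff ℓ hφlip z (z - ℓ⁻¹ • G)
    have he : z - ℓ⁻¹ • G - z = -(ℓ⁻¹ • G) := by abel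
    rw [he] at this
    rw [inner_neg_right, real_inner_smul_right, ← hG] at this
    have hn : ‖-(ℓ⁻¹ • G)‖ ^ 2 = ℓ⁻¹ ^ 2 * ‖G‖ ^ 2 := by
      rw [norm_neg, norm_smul, Real.norm_eq_abs, abs_of_pos (inv_pos.mpr hℓ), mul_pow]
    rw [hn] at this
    have hGsq : (inner ℝ G G : ℝ) = ‖G‖ ^ 2 := real_inner_self_eq_norm_sq G
    rw [hGsq] at this
    have : φ (z - ℓ⁻¹ • G) ≤ φ z - ℓ⁻¹ * ‖G‖ ^ 2 + ℓ / 2 * (ℓ⁻¹ ^ 2 * ‖G‖ ^ 2) := by linarith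
    have hℓne : ℓ ≠ 0 := ne_of_gt hℓ
    calc φ (z - ℓ⁻¹ • G) ≤ φ z - ℓ⁻¹ * ‖G‖ ^ 2 + ℓ / 2 * (ℓ⁻¹ ^ 2 * ‖G‖ ^ 2) := this
      _ = φ z - 1 / (2 * ℓ) * ‖G‖ ^ 2 := by field_simp; ring
  have hchain : φ y ≤ φ z - 1 / (2 * ℓ) * ‖G‖ ^ 2 := le_trans hmin hdesc
  have hGval : G = gradient f z - gradient f y := by rw [hG, hφgrad, hc']
  rw [hGval] at hchain
  simp only [hφ] at hchain
  have hinner : (inner ℝ c (z - y) : ℝ) = (inner ℝ c z : ℝ) - (inner ℝ c y : ℝ) := inner_sub_right c z y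
  rw [hc'] at hinner ⊢
  linarith

lemma convexOn_half_norm_sq (μ : ℝ) (hμ : 0 ≤ μ) :
    ConvexOn ℝ univ (fun z : E => μ / 2 * ‖z‖ ^ 2) := by
  refine ⟨convex_univ, fun x _ y _ a b ha hb hab => ?_⟩
  simp only [smul_eq_mul]
  have h1 : ‖a • x + b • y‖ ≤ a * ‖x‖ + b * ‖y‖ := by
    calc ‖a • x + b • y‖ ≤ ‖a • x‖ + ‖b • y‖ := norm_add_le _ _
      _ = a * ‖x‖ + b * ‖y‖ := by
          rw [norm_smul, norm_smul, Real.norm_eq_abs, Real.norm_eq_abs,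
            abs_of_nonneg ha, abs_of_nonneg hb]
  have hs : ‖a • x + b • y‖ ^ 2 ≤ (a * ‖x‖ + b * ‖y‖) ^ 2 := by
    nlinarith [norm_nonneg (a • x + b • y)]
  have h2 : (a * ‖x‖ + b * ‖y‖) ^ 2 ≤ a * ‖x‖ ^ 2 + b * ‖y‖ ^ 2 := by
    nlinarith [sq_nonneg (‖x‖ - ‖y‖), mul_nonneg ha hb]
  nlinarith [hμ, hs, h2]

lemma sum_shift (a : ℝ) (K : ℕ) (t : ℕ → ℝ) :
    ∑ k ∈ Finset.range (K + 2), a ^ (K + 1 - k) * t k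
      = a * ∑ k ∈ Finset.range (K + 1), a ^ (K - k) * t k + t (K + 1) := by
  rw [Finset.sum_range_succ, Finset.mul_sum]
  congr 1
  · refine Finset.sum_congr rfl fun k hk => ?_
    rw [Finset.mem_range] at hk
    rw [show K + 1 - k = (K - k) + 1 by omega, pow_succ]
    ring
  · simp

set_option maxHeartbeats 1000000 in
/-- deterministic recursion of inexact SGD on a strongly convex function,
Lemma D.3 of Gorbunov et al.: if `h` is `μ`-strongly convex and `ℓ`-smooth with minimizer
`y*`, `0 < η ≤ 1/ℓ`, and `ŷ_{k+1} = ŷ_k - η g_k` with `ω_k := g_k - ∇h(ŷ_k)`, then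
`‖ŷ_{K+1} - y*‖² ≤ (1-ημ)^{K+1} ‖ŷ_0 - y*‖² + η² ∑_k (1-ημ)^{K-k} ‖ω_k‖²
  - 2η ∑_k (1-ημ)^{K-k} ⟪ŷ_k - y* - η ∇h(ŷ_k), ω_k⟫`. -/
theorem sgd_strongly_convex_recursion
    {dy : ℕ} (h : Euc dy → ℝ) (μ ℓ : ℝ) (hμ : 0 < μ) (hℓ : 0 < ℓ)
    (hconv : ConvexOn ℝ univ (fun y => h y - μ / 2 * ‖y‖ ^ 2))
    (hdiff : Differentiable ℝ h)
    (hsmooth : ∀ u v, ‖gradient h u - gradient h v‖ ≤ ℓ * ‖u - v‖)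
    (ystar : Euc dy) (hmin : IsMinOn h univ ystar)
    (η : ℝ) (hη0 : 0 < η) (hη : η ≤ 1 / ℓ)
    (K : ℕ) (gv yh : ℕ → Euc dy)
    (hrec : ∀ k, yh (k + 1) = yh k - η • gv k) :
    ‖yh (K + 1) - ystar‖ ^ 2
      ≤ (1 - η * μ) ^ (K + 1) * ‖yh 0 - ystar‖ ^ 2
        + η ^ 2 * ∑ k ∈ Finset.range (K + 1),
            (1 - η * μ) ^ (K - k) * ‖gv k - gradient h (yh k)‖ ^ 2
        - 2 * η * ∑ k ∈ Finset.range (K + 1), (1 - η * μ) ^ (K - k) *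
            (inner ℝ (yh k - ystar - η • gradient h (yh k)) (gv k - gradient h (yh k)) : ℝ) := by

  rcases Nat.eq_zero_or_pos dy with hdy | hdy
  · subst hdy
    haveI : Subsingleton (Euc 0) := ⟨fun a b => by ext i; exact i.elim0⟩
    have hn : ∀ v : Euc 0, ‖v‖ = 0 := fun v => by rw [Subsingleton.elim v 0, norm_zero]
    have hi : ∀ v w : Euc 0, (inner ℝ v w : ℝ) = 0 := fun v w => by
      rw [Subsingleton.elim v 0, inner_zero_left]
    simp [hn, hi]
  -- positive dimension
  have hηℓ : η * ℓ ≤ 1 := by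
    rw [le_div_iff₀ hℓ] at hη
    exact hη
  -- gradient at minimizer vanishes
  have hgradstar : gradient h ystar = 0 := by
    have hloc : IsLocalMin h ystar := hmin.isLocalMin (by simp)
    have hfd : fderiv ℝ h ystar = 0 := hloc.fderiv_eq_zero
    show (InnerProductSpace.toDual ℝ (Euc dy)).symm (fderiv ℝ h ystar) = 0
    rw [hfd, map_zero]
  -- h is convex
  have hcv : ConvexOn ℝ univ h := by
    have := hconv.add (convexOn_half_norm_sq (E := Euc dy) μ hμ.le)
    have he : (fun y : Euc dy => h y - μ / 2 * ‖y‖ ^ 2) + (fun z : Euc dy => μ / 2 * ‖z‖ ^ 2)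
        = h := by funext w; simp
    rwa [he] at this
  -- strong monotonicity wrt ystar
  have hsm : ∀ y : Euc dy, μ * ‖y - ystar‖ ^ 2 ≤ (inner ℝ (gradient h y) (y - ystar) : ℝ) := by
    intro y
    have hφd : Differentiable ℝ (fun z : Euc dy => h z - μ / 2 * ‖z‖ ^ 2) :=
      hdiff.sub (diff_half_norm_sq μ)
    have h1 := convex_grad_ineq _ hφd hconv y ystar
    have h2 := convex_grad_ineq _ hφd hconv ystar y
    rw [gradient_sub_half_norm_sq h hdiff μ] at h1 h2
    rw [hgradstar] at h2
    simp only [inner_sub_left, inner_smul_left, RCLike.conj_to_real, zero_sub,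
      inner_neg_left] at h1 h2
    have h3 : (inner ℝ (gradient h y) (ystar - y) : ℝ)
        = -(inner ℝ (gradient h y) (y - ystar) : ℝ) := by
      rw [← inner_neg_right]; congr 1; abel
    rw [h3] at h1
    have h4 : (inner ℝ (y - ystar) (y - ystar) : ℝ) = ‖y - ystar‖ ^ 2 :=
      real_inner_self_eq_norm_sq _
    have h5 : (inner ℝ y (ystar - y) : ℝ) + (inner ℝ ystar (y - ystar) : ℝ)
        = -‖y - ystar‖ ^ 2 := by
      rw [← h4, show ystar - y = -(y - ystar) from by abel, inner_neg_right,
        inner_sub_left]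
      ring
    have h6 : μ * (inner ℝ y (ystar - y) : ℝ) + μ * (inner ℝ ystar (y - ystar) : ℝ)
        = -(μ * ‖y - ystar‖ ^ 2) := by
      rw [← mul_add, h5]
      ring
    linarith
  -- cocoercivity wrt ystar
  have hcc : ∀ y : Euc dy, ‖gradient h y‖ ^ 2 ≤ ℓ * (inner ℝ (gradient h y) (y - ystar) : ℝ) := by
    intro y
    have h1 := coco h hdiff hcv ℓ hℓ hsmooth ystar y
    have h2 := coco h hdiff hcv ℓ hℓ hsmooth y ystar
    simp only [hgradstar, inner_zero_left, add_zero, sub_zero, zero_sub, norm_neg] at h1 h2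
    have h3 : (inner ℝ (gradient h y) (ystar - y) : ℝ)
        = -(inner ℝ (gradient h y) (y - ystar) : ℝ) := by
      rw [← inner_neg_right]; congr 1; abel
    rw [h3] at h2
    have hsum : 2 * (1 / (2 * ℓ)) * ‖gradient h y‖ ^ 2
        ≤ (inner ℝ (gradient h y) (y - ystar) : ℝ) := by linarith
    have hmul := mul_le_mul_of_nonneg_left hsum hℓ.le
    calc ‖gradient h y‖ ^ 2
        = ℓ * (2 * (1 / (2 * ℓ)) * ‖gradient h y‖ ^ 2) := by field_simp
      _ ≤ ℓ * (inner ℝ (gradient h y) (y - ystar) : ℝ) := hmul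
  -- one-step recursion
  have step : ∀ k : ℕ, ‖yh (k + 1) - ystar‖ ^ 2
      ≤ (1 - η * μ) * ‖yh k - ystar‖ ^ 2
        + η ^ 2 * ‖gv k - gradient h (yh k)‖ ^ 2
        - 2 * η * (inner ℝ (yh k - ystar - η • gradient h (yh k))
            (gv k - gradient h (yh k)) : ℝ) := by
    intro k
    set y := yh k with hy
    set G := gradient h y with hGdef
    set ω := gv k - G with hω
    set x := y - ystar with hx
    have hdecomp : yh (k + 1) - ystar = (x - η • G) - η • ω := by
      rw [hrec k, hω, hx, smul_sub]
      abel
    have hnorm : ‖yh (k + 1) - ystar‖ ^ 2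
        = ‖x - η • G‖ ^ 2 - 2 * η * (inner ℝ (x - η • G) ω : ℝ) + η ^ 2 * ‖ω‖ ^ 2 := by
      rw [hdecomp, norm_sub_sq_real, real_inner_smul_right, norm_smul, Real.norm_eq_abs,
        abs_of_pos hη0, mul_pow]
      ring
    have hcontract : ‖x - η • G‖ ^ 2 ≤ (1 - η * μ) * ‖x‖ ^ 2 := by
      have hexp : ‖x - η • G‖ ^ 2
          = ‖x‖ ^ 2 - 2 * η * (inner ℝ G x : ℝ) + η ^ 2 * ‖G‖ ^ 2 := by
        rw [norm_sub_sq_real, real_inner_smul_right, norm_smul, Real.norm_eq_abs,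
          abs_of_pos hη0, mul_pow, real_inner_comm]
        ring
      have h1 : μ * ‖x‖ ^ 2 ≤ (inner ℝ G x : ℝ) := by
        have := hsm y
        rw [← hx, ← hGdef] at this
        exact this
      have h2 : ‖G‖ ^ 2 ≤ ℓ * (inner ℝ G x : ℝ) := by
        have := hcc y
        rw [← hx, ← hGdef] at this
        exact this
      have hGx : 0 ≤ (inner ℝ G x : ℝ) :=
        le_trans (by positivity) h1
      rw [hexp]
      nlinarith [mul_le_mul_of_nonneg_left h2 (sq_nonneg η), sq_nonneg ‖x‖,
        mul_nonneg hη0.le hGx, mul_le_mul_of_nonneg_right hηℓ (mul_nonneg hη0.le hGx)]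
    rw [hnorm]
    linarith
  -- nonnegativity of contraction factor
  have hμℓ : μ ≤ ℓ := by
    set y : Euc dy := ystar + EuclideanSpace.single ⟨0, hdy⟩ (1 : ℝ) with hy
    have hyx : y - ystar = EuclideanSpace.single ⟨0, hdy⟩ (1 : ℝ) := by rw [hy]; abel
    have hny : ‖y - ystar‖ = 1 := by rw [hyx, EuclideanSpace.norm_single, norm_one]
    have h1 := hsm y
    have h2 : (inner ℝ (gradient h y) (y - ystar) : ℝ) ≤ ℓ * ‖y - ystar‖ ^ 2 := by
      calc (inner ℝ (gradient h y) (y - ystar) : ℝ)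
          ≤ ‖gradient h y‖ * ‖y - ystar‖ := real_inner_le_norm _ _
        _ = ‖gradient h y - gradient h ystar‖ * ‖y - ystar‖ := by rw [hgradstar, sub_zero]
        _ ≤ (ℓ * ‖y - ystar‖) * ‖y - ystar‖ :=
            mul_le_mul_of_nonneg_right (hsmooth y ystar) (norm_nonneg _)
        _ = ℓ * ‖y - ystar‖ ^ 2 := by ring
    rw [hny] at h1 h2
    simpa using le_trans h1 h2
  have ha0 : 0 ≤ 1 - η * μ := by nlinarith
  -- induction
  induction K with
  | zero =>
      simp only [Finset.sum_range_one, Nat.sub_zero, pow_zero, one_mul, pow_one, zero_add]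
      have := step 0
      linarith
  | succ K ih =>
      have hs1 := sum_shift (1 - η * μ) K (fun k => ‖gv k - gradient h (yh k)‖ ^ 2)
      have hs2 := sum_shift (1 - η * μ) K (fun k =>
        (inner ℝ (yh k - ystar - η • gradient h (yh k)) (gv k - gradient h (yh k)) : ℝ))
      have hK2 : K + 1 + 1 = K + 2 := rfl
      have hstep := step (K + 1)
      have hscale := mul_le_mul_of_nonneg_left ih ha0
      calc ‖yh (K + 1 + 1) - ystar‖ ^ 2
          ≤ (1 - η * μ) * ‖yh (K + 1) - ystar‖ ^ 2
              + η ^ 2 * ‖gv (K + 1) - gradient h (yh (K + 1))‖ ^ 2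
              - 2 * η * (inner ℝ (yh (K + 1) - ystar - η • gradient h (yh (K + 1)))
                  (gv (K + 1) - gradient h (yh (K + 1))) : ℝ) := hstep
        _ ≤ (1 - η * μ) * ((1 - η * μ) ^ (K + 1) * ‖yh 0 - ystar‖ ^ 2
              + η ^ 2 * ∑ k ∈ Finset.range (K + 1),
                  (1 - η * μ) ^ (K - k) * ‖gv k - gradient h (yh k)‖ ^ 2
              - 2 * η * ∑ k ∈ Finset.range (K + 1), (1 - η * μ) ^ (K - k) *
                  (inner ℝ (yh k - ystar - η • gradient h (yh k))
                    (gv k - gradient h (yh k)) : ℝ))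
              + η ^ 2 * ‖gv (K + 1) - gradient h (yh (K + 1))‖ ^ 2
              - 2 * η * (inner ℝ (yh (K + 1) - ystar - η • gradient h (yh (K + 1)))
                  (gv (K + 1) - gradient h (yh (K + 1))) : ℝ) := by linarith
        _ = (1 - η * μ) ^ (K + 1 + 1) * ‖yh 0 - ystar‖ ^ 2
              + η ^ 2 * ∑ k ∈ Finset.range (K + 1 + 1),
                  (1 - η * μ) ^ (K + 1 - k) * ‖gv k - gradient h (yh k)‖ ^ 2
              - 2 * η * ∑ k ∈ Finset.range (K + 1 + 1), (1 - η * μ) ^ (K + 1 - k) *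
                  (inner ℝ (yh k - ystar - η • gradient h (yh k))
                    (gv k - gradient h (yh k)) : ℝ) := by
            rw [show K + 1 + 1 = K + 2 from rfl, hs1, hs2]
            ring
end
end
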